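/- arXiv:1612.02090 — 7 statements merged into one kernel-verified Lean document; each statement's English description precedes it below -/
import Mathlib

section
/- Inverse-probability-of-censoring-weighting identification: let X : Ω → ℝ^k be a random vector such that C is independent of the pair (Y, X), and suppose S_C(Y) > 0 ℙ-almost surely. Then for every measurable g : ℝ × ℝ^k → ℝ with g(Y, X) integrable, the random variable 1{Y ≤ C} · g(Y, X) / S_C(Y) is integrable and E[1{Y ≤ C} · g(Y, X) / S_C(Y)] = E[g(Y, X)]. (This is the core identification mechanism behind the Kaplan–Meier integrals in the paper's Lemma 1: on the event {Y ≤ C} one has Q = Y.) -/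
/-!
By independence, the law of `((Y, X), C)` is the product of the law `ρ` of `(Y, X)` and the
law `ν` of `C`, so by Fubini one may integrate out `C` first. For fixed `p = (y, x)` the
`ν`-integral of `1{y ≤ c} g(p) / ν[y, ∞)` is `g(p)` as soon as `ν[y, ∞) > 0`, which holds for
`ρ`-a.e. `p`; the same computation with `|g|` in place of `g` gives integrability.
-/

open MeasureTheory ProbabilityTheory

namespace MeasureTheory

variable {β γ : Type*} [MeasurableSpace γ]

/-- With `E = {Y ≤ C}` and `ν` the law of `C`, this is the IPCW integrand `δ g(Y, X) / S_C(Y)`. -/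
noncomputable def ipw (ν : Measure γ) (E : Set (β × γ)) (h : β → ℝ) (q : β × γ) : ℝ :=
  E.indicator 1 q * h q.1 / ν.real (Prod.mk q.1 ⁻¹' E)

variable {ν : Measure γ} {E : Set (β × γ)} {h : β → ℝ}

lemma ipw_mk (p : β) (c : γ) :
    ipw ν E h (p, c) = (Prod.mk p ⁻¹' E).indicator 1 c * (h p / ν.real (Prod.mk p ⁻¹' E)) := by
  rw [ipw, mul_div_assoc]
  rfl

lemma norm_ipw (q : β × γ) : ‖ipw ν E h q‖ = ipw ν E (fun p => ‖h p‖) q := by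
  by_cases hq : q ∈ E <;> simp [ipw, hq, abs_of_nonneg measureReal_nonneg]

variable [MeasurableSpace β]

lemma measurable_ipw [SFinite ν] (hE : MeasurableSet E) (hh : Measurable h) :
    Measurable (ipw ν E h) :=
  ((measurable_const.indicator hE).mul (hh.comp measurable_fst)).div
    ((measurable_measure_prodMk_left hE).ennreal_toReal.comp measurable_fst)

lemma integrable_ipw_section [IsFiniteMeasure ν] (hE : MeasurableSet E) (p : β) :
    Integrable (fun c => ipw ν E h (p, c)) ν := by
  simp_rw [ipw_mk]
  exact ((integrable_const 1).indicator (measurable_prodMk_left hE)).mul_const _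

lemma integral_ipw_section [IsFiniteMeasure ν] (hE : MeasurableSet E) {p : β}
    (hp : ν.real (Prod.mk p ⁻¹' E) ≠ 0) :
    ∫ c, ipw ν E h (p, c) ∂ν = h p := by
  simp_rw [ipw_mk]
  rw [integral_mul_const, integral_indicator_one (measurable_prodMk_left hE),
    mul_div_cancel₀ _ hp]

variable {ρ : Measure β} [IsFiniteMeasure ν]

lemma integrable_ipw_prod (hE : MeasurableSet E) (hh : Measurable h) (hρ : Integrable h ρ)
    (hw : ∀ᵐ p ∂ρ, ν.real (Prod.mk p ⁻¹' E) ≠ 0) :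
    Integrable (ipw ν E h) (ρ.prod ν) := by
  refine (integrable_prod_iff (measurable_ipw hE hh).aestronglyMeasurable).2
    ⟨ae_of_all _ (integrable_ipw_section hE), hρ.norm.congr ?_⟩
  filter_upwards [hw] with p hp
  simp_rw [norm_ipw]
  exact (integral_ipw_section (h := fun p => ‖h p‖) hE hp).symm

lemma integral_ipw_prod [SFinite ρ] (hE : MeasurableSet E) (hh : Measurable h)
    (hρ : Integrable h ρ) (hw : ∀ᵐ p ∂ρ, ν.real (Prod.mk p ⁻¹' E) ≠ 0) :
    ∫ q, ipw ν E h q ∂(ρ.prod ν) = ∫ p, h p ∂ρ := by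
  rw [integral_prod _ (integrable_ipw_prod hE hh hρ hw)]
  exact integral_congr_ae (hw.mono fun p hp => integral_ipw_section hE hp)

end MeasureTheory

namespace ProbabilityTheory

variable {Ω β γ : Type*} [MeasurableSpace Ω] [MeasurableSpace β] [MeasurableSpace γ]
  {μ : Measure Ω} [IsFiniteMeasure μ] {T : Ω → β} {C : Ω → γ} {E : Set (β × γ)} {h : β → ℝ}

lemma IndepFun.integrable_ipw_and_integral_ipw_eq (hTC : IndepFun T C μ) (hT : Measurable T)
    (hC : Measurable C) (hE : MeasurableSet E) (hh : Measurable h)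
    (hint : Integrable (fun ω => h (T ω)) μ)
    (hw : ∀ᵐ ω ∂μ, (μ.map C).real (Prod.mk (T ω) ⁻¹' E) ≠ 0) :
    Integrable (fun ω => ipw (μ.map C) E h (T ω, C ω)) μ ∧
      ∫ ω, ipw (μ.map C) E h (T ω, C ω) ∂μ = ∫ ω, h (T ω) ∂μ := by
  have hlaw := hTC.map_prod_eq_prod_map_map hT.aemeasurable hC.aemeasurable
  have hpair : AEMeasurable (fun ω => (T ω, C ω)) μ := (hT.prodMk hC).aemeasurable
  have hF := measurable_ipw (ν := μ.map C) hE hh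
  have hρ : Integrable h (μ.map T) :=
    (integrable_map_measure hh.aestronglyMeasurable hT.aemeasurable).2 hint
  have hwρ : ∀ᵐ p ∂μ.map T, (μ.map C).real (Prod.mk p ⁻¹' E) ≠ 0 :=
    (ae_map_iff hT.aemeasurable
      ((measurable_measure_prodMk_left hE).ennreal_toReal (measurableSet_singleton 0).compl)).2 hw
  constructor
  · refine (integrable_map_measure hF.aestronglyMeasurable hpair).1 ?_
    rw [hlaw]
    exact integrable_ipw_prod hE hh hρ hwρ
  · rw [← integral_map hpair hF.aestronglyMeasurable, hlaw, integral_ipw_prod hE hh hρ hwρ,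
      integral_map hT.aemeasurable hh.aestronglyMeasurable]

end ProbabilityTheory

/-- **Inverse-probability-of-censoring-weighting identification.**
If the censoring variable `C` is independent of the pair `(Y, X)` and `S_C(Y) > 0` a.s.,
where `S_C(s) = ℙ(C ≥ s)`, then for every measurable `g` with `g (Y, X)` integrable, the
random variable `1{Y ≤ C} · g(Y, X) / S_C(Y)` is integrable and its expectation equals
`E[g(Y, X)]`. -/
theorem ipcw_identification
    {Ω : Type*} [MeasurableSpace Ω]
    (μ : Measure Ω) [IsProbabilityMeasure μ] {k : ℕ}
    (Y : Ω → ℝ) (hY : Measurable Y)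
    (C : Ω → ℝ) (hC : Measurable C)
    (X : Ω → (Fin k → ℝ)) (hX : Measurable X)
    (hindep : IndepFun C (fun ω => (Y ω, X ω)) μ)
    (hpos : ∀ᵐ ω ∂μ, 0 < (μ {ω' | Y ω ≤ C ω'}).toReal)
    (g : ℝ × (Fin k → ℝ) → ℝ) (hg : Measurable g)
    (hgint : Integrable (fun ω => g (Y ω, X ω)) μ) :
    Integrable
      (fun ω => (if Y ω ≤ C ω then (1 : ℝ) else 0) * g (Y ω, X ω)
          / (μ {ω' | Y ω ≤ C ω'}).toReal) μ ∧
    (∫ ω, (if Y ω ≤ C ω then (1 : ℝ) else 0) * g (Y ω, X ω)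
          / (μ {ω' | Y ω ≤ C ω'}).toReal ∂μ)
      = ∫ ω, g (Y ω, X ω) ∂μ := by
  have hsurv (y : ℝ) : (μ {ω' | y ≤ C ω'}).toReal = (μ.map C).real {c | y ≤ c} :=
    congrArg ENNReal.toReal (Measure.map_apply hC measurableSet_Ici).symm
  have hE : MeasurableSet {q : (ℝ × (Fin k → ℝ)) × ℝ | q.1.1 ≤ q.2} :=
    measurableSet_le (measurable_fst.comp measurable_fst) measurable_snd
  have hintegrand : (fun ω => (if Y ω ≤ C ω then (1 : ℝ) else 0) * g (Y ω, X ω)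
      / (μ {ω' | Y ω ≤ C ω'}).toReal) =
      fun ω => ipw (μ.map C) {q | q.1.1 ≤ q.2} g ((Y ω, X ω), C ω) := by
    funext ω
    simp only [ipw, Set.indicator_apply, Set.mem_ofPred_eq, Pi.one_apply,
      Set.preimage_ofPred_eq, hsurv]
  rw [hintegrand]
  refine hindep.symm.integrable_ipw_and_integral_ipw_eq (hY.prodMk hX) hC hE hg hgint ?_
  filter_upwards [hpos] with ω hω
  exact (hsurv (Y ω) ▸ hω).ne'
end

section
/- Joint identification under selection on observables and independent censoring: assume additionally that C : Ω → ℝ is independent of the quadruple (Y(0), Y(1), T, X), and let Q = min(Y, C), δ = 1{Y ≤ C}, S_C(s) = ℙ(C ≥ s). Suppose S_C(Y(1)) > 0 and S_C(Y(0)) > 0 ℙ-almost surely. Then for every measurable h : ℝ × ℝ^k → ℝ with h(Y(1), X) and h(Y(0), X) integrable: E[(T · δ / (p(X) · S_C(Q))) · h(Q, X)] = E[h(Y(1), X)] and E[((1 − T) · δ / ((1 − p(X)) · S_C(Q))) · h(Q, X)] = E[h(Y(0), X)]. (This realizes the paper's Lemma 1 in the special case, explicitly allowed by the paper, where the censoring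 variable is independent of outcomes, treatment and covariates.) -/
/-!
Independence of `C` from `(Y(0), Y(1), T, X)` makes the law of `(C, Y(1), T, X)` a product, so by
Fubini the censoring weight `δ / S_C(Q)` integrates out: on `{T = 1}` it equals
`1{Y(1) ≤ C} / S_C(Y(1))`, whose integral in `C` is `1`. What remains is the inverse propensity
identity `E[T g(Y(1), X) / p(X)] = E[g(Y(1), X)]`, which holds because unconfoundedness upgrades
`p(X) = E[T | X]` to `p(X) = E[T | Y(0), Y(1), X]`; for binary `T` this is a π-λ argument on the
sets `{X ∈ B} ∩ {(Y(0), Y(1)) ∈ A}`. The control arm is the same with `1 - T` and `1 - p`.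
-/

open MeasureTheory ProbabilityTheory

section

variable {Ω : Type*} {m mΩ : MeasurableSpace Ω} {μ : Measure Ω}

lemma isPiSystem_image2_inter {S T : Set (Set Ω)} (hS : IsPiSystem S) (hT : IsPiSystem T) :
    IsPiSystem (Set.image2 (· ∩ ·) S T) := by
  rintro _ ⟨s, hs, t, ht, rfl⟩ _ ⟨s', hs', t', ht', rfl⟩ hne
  rw [Set.inter_inter_inter_comm] at hne ⊢
  exact ⟨_, hS s hs s' hs' hne.left, _, hT t ht t' ht' hne.right, rfl⟩

lemma MeasurableSpace.sup_eq_generateFrom_image2_inter (m₁ m₂ : MeasurableSpace Ω) :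
    m₁ ⊔ m₂ = MeasurableSpace.generateFrom
      (Set.image2 (· ∩ ·) {s | MeasurableSet[m₁] s} {t | MeasurableSet[m₂] t}) := by
  refine le_antisymm (sup_le (fun s hs => ?_) fun t ht => ?_) (MeasurableSpace.generateFrom_le ?_)
  · exact MeasurableSpace.measurableSet_generateFrom ⟨s, hs, Set.univ, .univ, Set.inter_univ s⟩
  · exact MeasurableSpace.measurableSet_generateFrom ⟨Set.univ, .univ, t, ht, Set.univ_inter t⟩
  · rintro _ ⟨s, hs, t, ht, rfl⟩
    exact (le_sup_left (a := m₁) _ hs).inter (le_sup_right (b := m₂) _ ht)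

lemma setIntegral_eq_of_isPiSystem {E : Type*} [NormedAddCommGroup E] [NormedSpace ℝ E]
    (hm : m ≤ mΩ) {S : Set (Set Ω)}
    (hgen : m = MeasurableSpace.generateFrom S) (hpi : IsPiSystem S) {f g : Ω → E}
    (hf : Integrable f μ) (hg : Integrable g μ) (huniv : ∫ x, f x ∂μ = ∫ x, g x ∂μ)
    (hS : ∀ s ∈ S, ∫ x in s, f x ∂μ = ∫ x in s, g x ∂μ) {s : Set Ω} (hs : MeasurableSet[m] s) :
    ∫ x in s, f x ∂μ = ∫ x in s, g x ∂μ := by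
  induction s, hs using MeasurableSpace.induction_on_inter hgen hpi with
  | empty => simp
  | basic t ht => exact hS t ht
  | compl t ht ih =>
    have hf' := integral_add_compl (hm t ht) hf
    have hg' := integral_add_compl (hm t ht) hg
    rw [ih, huniv, ← hg'] at hf'
    exact add_left_cancel hf'
  | iUnion t hdisj ht ih =>
    rw [integral_iUnion (fun i => hm _ (ht i)) hdisj hf.integrableOn,
      integral_iUnion (fun i => hm _ (ht i)) hdisj hg.integrableOn]
    exact tsum_congr ih

theorem ProbabilityTheory.CondIndep.condExp_indicator_sup_ae_eq [StandardBorelSpace Ω]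
    [IsFiniteMeasure μ] {m₁ m₂ : MeasurableSpace Ω} {hm : m ≤ mΩ} (h : CondIndep m m₁ m₂ hm μ)
    (hm₁ : m₁ ≤ mΩ) (hm₂ : m₂ ≤ mΩ) {B : Set Ω} (hB : MeasurableSet[m₂] B) :
    μ⟦B | m ⊔ m₁⟧ =ᵐ[μ] μ⟦B | m⟧ := by
  have hind_int {s : Set Ω} (hs : MeasurableSet[mΩ] s) :
      Integrable (s.indicator fun _ => (1 : ℝ)) μ :=
    (integrable_const 1).indicator hs
  refine (ae_eq_condExp_of_forall_setIntegral_eq (sup_le hm hm₁) (hind_int (hm₂ B hB))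
    (fun _ _ _ => integrable_condExp.integrableOn) (fun s hs _ => ?_)
    ⟨_, stronglyMeasurable_condExp.mono le_sup_left, .rfl⟩).symm
  refine setIntegral_eq_of_isPiSystem (sup_le hm hm₁)
    (MeasurableSpace.sup_eq_generateFrom_image2_inter m m₁)
    (isPiSystem_image2_inter (@MeasurableSpace.isPiSystem_measurableSet Ω m)
      (@MeasurableSpace.isPiSystem_measurableSet Ω m₁))
    integrable_condExp (hind_int (hm₂ B hB)) (integral_condExp hm) ?_ hs
  rintro _ ⟨b, hb, a, ha, rfl⟩
  have hmul : (a.indicator fun _ => (1 : ℝ)) * μ⟦B | m⟧ = a.indicator (μ⟦B | m⟧) := by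
    ext x
    by_cases hx : x ∈ a <;> simp [hx]
  have hpull : μ[a.indicator (μ⟦B | m⟧) | m] =ᵐ[μ] μ⟦a | m⟧ * μ⟦B | m⟧ := by
    rw [← hmul]
    exact condExp_mul_of_stronglyMeasurable_right stronglyMeasurable_condExp
      (hmul ▸ integrable_condExp.indicator (hm₁ a ha)) (hind_int (hm₁ a ha))
  calc ∫ x in b ∩ a, (μ⟦B | m⟧) x ∂μ
      = ∫ x in b, (μ[a.indicator (μ⟦B | m⟧) | m]) x ∂μ := by
        rw [setIntegral_condExp hm (integrable_condExp.indicator (hm₁ a ha)) hb,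
          setIntegral_indicator (hm₁ a ha)]
    _ = ∫ x in b, (μ⟦a ∩ B | m⟧) x ∂μ := by
        refine setIntegral_congr_ae (hm b hb) ?_
        filter_upwards [hpull, (condIndep_iff m m₁ m₂ hm hm₁ hm₂ μ).1 h a B ha hB] with x h1 h2 _
        rw [h1, h2]
    _ = ∫ x in b ∩ a, B.indicator (fun _ => (1 : ℝ)) x ∂μ := by
        rw [setIntegral_condExp hm (hind_int ((hm₁ a ha).inter (hm₂ B hB))) hb,
          setIntegral_indicator ((hm₁ a ha).inter (hm₂ B hB)), setIntegral_indicator (hm₂ B hB),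
          Set.inter_assoc]

theorem ProbabilityTheory.CondIndepFun.condExp_sup_comap_ae_eq [StandardBorelSpace Ω]
    [IsFiniteMeasure μ] {β γ : Type*} [mβ : MeasurableSpace β] [mγ : MeasurableSpace γ]
    {X : Ω → β} {V : Ω → γ} {T : Ω → ℝ} (hX : Measurable X) (hV : Measurable V)
    (hT : Measurable T) (hT01 : ∀ ω, T ω = 0 ∨ T ω = 1)
    (h : CondIndepFun (mβ.comap X) hX.comap_le V T μ) :
    μ[T | mβ.comap X ⊔ mγ.comap V] =ᵐ[μ] μ[T | mβ.comap X] := by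
  have hT_eq : (T ⁻¹' {1}).indicator (fun _ => (1 : ℝ)) = T := by
    ext ω
    rcases hT01 ω with h | h <;> simp [h]
  rw [← hT_eq]
  exact ((condIndepFun_iff_condIndep _ _ _ _ μ).1 h).condExp_indicator_sup_ae_eq hV.comap_le
    hT.comap_le ⟨{1}, measurableSet_singleton 1, rfl⟩

lemma integrable_of_forall_eq_zero_or_eq_one [IsFiniteMeasure μ] {A : Ω → ℝ} (hA : Measurable A)
    (hA01 : ∀ ω, A ω = 0 ∨ A ω = 1) : Integrable A μ :=
  .of_bound hA.aestronglyMeasurable 1 (.of_forall fun ω => by rcases hA01 ω with h | h <;> simp [h])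

theorem integral_mul_div_condExp (hm : m ≤ mΩ) [SigmaFinite (μ.trim hm)]
    {A e G : Ω → ℝ} (hA : Integrable A μ) (hce : e =ᵐ[μ] μ[A | m])
    (he : StronglyMeasurable[m] e) (hG : StronglyMeasurable[m] G) (he0 : ∀ᵐ ω ∂μ, e ω ≠ 0)
    (hAG : Integrable (fun ω => A ω * G ω / e ω) μ) :
    ∫ ω, A ω * G ω / e ω ∂μ = ∫ ω, G ω ∂μ := by
  have hcomm : (fun ω => A ω * G ω / e ω) = (G / e) * A := by
    ext ω
    simp only [Pi.mul_apply, Pi.div_apply]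
    ring
  rw [hcomm] at hAG ⊢
  calc ∫ ω, ((G / e) * A) ω ∂μ
      = ∫ ω, (μ[(G / e) * A | m]) ω ∂μ := (integral_condExp hm).symm
    _ = ∫ ω, G ω ∂μ := by
        refine integral_congr_ae ?_
        filter_upwards [condExp_mul_of_stronglyMeasurable_left (hG.div he) hAG hA, hce, he0]
          with ω h1 h2 h3
        rw [h1, Pi.mul_apply, ← h2, Pi.div_apply, div_mul_cancel₀ _ h3]

def survival (μ : Measure Ω) (C : Ω → ℝ) (s : ℝ) : ℝ :=
  μ.real {ω | s ≤ C ω}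

lemma measurable_survival [IsFiniteMeasure μ] (C : Ω → ℝ) : Measurable (survival μ C) :=
  Antitone.measurable fun _ _ hst =>
    measureReal_mono fun _ (hω : _ ≤ _) => hst.trans hω

theorem ProbabilityTheory.IndepFun.integral_ite_le_div_survival {β : Type*} [MeasurableSpace β]
    [IsProbabilityMeasure μ] {C : Ω → ℝ} {Z : Ω → β} (hind : IndepFun C Z μ) (hC : Measurable C)
    (hZ : Measurable Z) {τ f : β → ℝ} (hτ : Measurable τ) (hf : Measurable f)
    (hint : Integrable (fun ω => f (Z ω)) μ) (hpos : ∀ᵐ ω ∂μ, 0 < survival μ C (τ (Z ω))) :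
    ∫ ω, (if τ (Z ω) ≤ C ω then f (Z ω) / survival μ C (τ (Z ω)) else 0) ∂μ
      = ∫ ω, f (Z ω) ∂μ := by
  set S := survival μ C
  set ν := μ.map C
  set ρ := μ.map Z
  have hS : Measurable S := measurable_survival C
  set Φ : ℝ × β → ℝ := fun x => if τ x.2 ≤ x.1 then f x.2 / S (τ x.2) else 0
  have hΦ : Measurable Φ :=
    Measurable.ite (measurableSet_le (hτ.comp measurable_snd) measurable_fst)
      ((hf.comp measurable_snd).div (hS.comp (hτ.comp measurable_snd))) measurable_const
  have hsection (z : β) (c : ℝ) :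
      Φ (c, z) = (Set.Ici (τ z)).indicator (fun _ => f z / S (τ z)) c := by
    simp [Φ, Set.indicator_apply]
  have hν (s : ℝ) : ν.real (Set.Ici s) = S s := by
    rw [map_measureReal_apply hC measurableSet_Ici]
    rfl
  have hρpos : ∀ᵐ z ∂ρ, 0 < S (τ z) :=
    (ae_map_iff hZ.aemeasurable (measurableSet_lt measurable_const (hS.comp hτ))).2 hpos
  have hinner : ∀ᵐ z ∂ρ, ∫ c, Φ (c, z) ∂ν = f z := by
    filter_upwards [hρpos] with z hz
    simp only [hsection]
    rw [integral_indicator_const _ measurableSet_Ici, hν, smul_eq_mul,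
      mul_div_cancel₀ _ hz.ne']
  have hΦint : Integrable Φ (ν.prod ρ) := by
    refine (integrable_prod_iff' hΦ.aestronglyMeasurable).2 ⟨.of_forall fun z => ?_, ?_⟩
    · simp only [hsection]
      exact (integrable_const _).indicator measurableSet_Ici
    · refine ((integrable_map_measure hf.aestronglyMeasurable hZ.aemeasurable).2 hint).norm.congr ?_
      filter_upwards [hρpos] with z hz
      simp only [hsection, norm_indicator_eq_indicator_norm]
      rw [integral_indicator_const _ measurableSet_Ici, hν, smul_eq_mul, norm_div,
        Real.norm_of_nonneg hz.le, mul_div_cancel₀ _ hz.ne']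
  calc ∫ ω, Φ (C ω, Z ω) ∂μ
      = ∫ x, Φ x ∂(ν.prod ρ) := by
        rw [← (indepFun_iff_map_prod_eq_prod_map_map hC.aemeasurable hZ.aemeasurable).1 hind,
          integral_map (hC.prodMk hZ).aemeasurable hΦ.aestronglyMeasurable]
    _ = ∫ z, ∫ c, Φ (c, z) ∂ν ∂ρ := integral_prod_symm Φ hΦint
    _ = ∫ z, f z ∂ρ := integral_congr_ae hinner
    _ = ∫ ω, f (Z ω) ∂μ := integral_map hZ.aemeasurable hf.aestronglyMeasurable

lemma censored_weight_eq {a y ys c q : ℝ} (S g : ℝ → ℝ) (ha : a = 0 ∨ a = 1)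
    (hy : a = 1 → y = ys) :
    a * (if y ≤ c then 1 else 0) / (q * S (min y c)) * g (min y c) =
      if ys ≤ c then a * g ys / q / S ys else 0 := by
  rcases ha with rfl | rfl
  · simp
  · obtain rfl := hy rfl
    split_ifs with h
    · rw [min_eq_left h]
      ring
    · simp

theorem integral_ipw_ipcw_eq {γ : Type*} [MeasurableSpace γ] [IsProbabilityMeasure μ]
    (hm : m ≤ mΩ) {X : Ω → γ} (hX : Measurable[m] X)
    {A : Ω → ℝ} (hA : Measurable A) (hA01 : ∀ ω, A ω = 0 ∨ A ω = 1)
    {Ys Y : Ω → ℝ} (hYs : Measurable[m] Ys) (hYA : ∀ ω, A ω = 1 → Y ω = Ys ω)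
    {q : γ → ℝ} (hq : Measurable q) {ε : ℝ} (hε : 0 < ε) (hqε : ∀ᵐ ω ∂μ, ε ≤ q (X ω))
    (hce : (fun ω => q (X ω)) =ᵐ[μ] μ[A | m])
    {C : Ω → ℝ} (hC : Measurable C) (hindep : IndepFun C (fun ω => (Ys ω, A ω, X ω)) μ)
    (hpos : ∀ᵐ ω ∂μ, 0 < survival μ C (Ys ω))
    {Q δ : Ω → ℝ} (hQ : ∀ ω, Q ω = min (Y ω) (C ω))
    (hδ : ∀ ω, δ ω = if Y ω ≤ C ω then 1 else 0)
    {g : ℝ × γ → ℝ} (hg : Measurable g) (hint : Integrable (fun ω => g (Ys ω, X ω)) μ) :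
    ∫ ω, A ω * δ ω / (q (X ω) * survival μ C (Q ω)) * g (Q ω, X ω) ∂μ
      = ∫ ω, g (Ys ω, X ω) ∂μ := by
  have hXΩ : Measurable X := hX.mono hm le_rfl
  have hYsΩ : Measurable Ys := hYs.mono hm le_rfl
  have hweight_int : Integrable (fun ω => A ω * g (Ys ω, X ω) / q (X ω)) μ := by
    refine (hint.norm.const_mul ε⁻¹).mono'
      ((hA.mul (hg.comp (hYsΩ.prodMk hXΩ))).div (hq.comp hXΩ)).aestronglyMeasurable ?_
    filter_upwards [hqε] with ω hqω
    have hq0 : 0 < q (X ω) := hε.trans_le hqω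
    rcases hA01 ω with h | h
    · simp [h]
      positivity
    · rw [h, one_mul, norm_div, Real.norm_of_nonneg hq0.le, div_eq_inv_mul]
      gcongr
  calc ∫ ω, A ω * δ ω / (q (X ω) * survival μ C (Q ω)) * g (Q ω, X ω) ∂μ
      = ∫ ω, (if Ys ω ≤ C ω then A ω * g (Ys ω, X ω) / q (X ω) / survival μ C (Ys ω) else 0)
          ∂μ := by
        congr with ω
        rw [hQ, hδ]
        exact censored_weight_eq _ (fun y => g (y, X ω)) (hA01 ω) (hYA ω)
    _ = ∫ ω, A ω * g (Ys ω, X ω) / q (X ω) ∂μ :=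
        hindep.integral_ite_le_div_survival (τ := Prod.fst)
          (f := fun z => z.2.1 * g (z.1, z.2.2) / q z.2.2) hC (by fun_prop) measurable_fst
          (by fun_prop) hweight_int hpos
    _ = ∫ ω, g (Ys ω, X ω) ∂μ :=
        integral_mul_div_condExp hm (integrable_of_forall_eq_zero_or_eq_one hA hA01) hce
          (hq.comp hX).stronglyMeasurable (hg.comp (hYs.prodMk hX)).stronglyMeasurable
          (hqε.mono fun ω h => (hε.trans_le h).ne') hweight_int

end

theorem ipw_ipcw_joint_identification_general
    {Ω : Type*} [MeasurableSpace Ω] [StandardBorelSpace Ω]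
    (μ : Measure Ω) [IsProbabilityMeasure μ] {k : ℕ}
    (X : Ω → (Fin k → ℝ)) (hX : Measurable X)
    (T : Ω → ℝ) (hT : Measurable T) (hT01 : ∀ ω, T ω = 0 ∨ T ω = 1)
    (Y0 Y1 Y : Ω → ℝ) (hY0 : Measurable Y0) (hY1 : Measurable Y1)
    (hY : ∀ ω, Y ω = T ω * Y1 ω + (1 - T ω) * Y0 ω)
    (hunconf : CondIndepFun (MeasurableSpace.comap X inferInstance) hX.comap_le
      (fun ω => (Y0 ω, Y1 ω)) T μ)
    (ε : ℝ) (hε : 0 < ε)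
    (p : (Fin k → ℝ) → ℝ) (hp : Measurable p)
    (hpX : (fun ω => p (X ω)) =ᵐ[μ] μ[T | MeasurableSpace.comap X inferInstance])
    (hoverlap : ∀ᵐ ω ∂μ, ε ≤ p (X ω) ∧ p (X ω) ≤ 1 - ε)
    (C : Ω → ℝ) (hC : Measurable C)
    (hindep : IndepFun C (fun ω => (Y0 ω, Y1 ω, T ω, X ω)) μ)
    (hpos1 : ∀ᵐ ω ∂μ, 0 < (μ {ω' | Y1 ω ≤ C ω'}).toReal)
    (hpos0 : ∀ᵐ ω ∂μ, 0 < (μ {ω' | Y0 ω ≤ C ω'}).toReal)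
    (Q : Ω → ℝ) (hQ : ∀ ω, Q ω = min (Y ω) (C ω))
    (δ : Ω → ℝ) (hδ : ∀ ω, δ ω = if Y ω ≤ C ω then (1 : ℝ) else 0)
    (h : ℝ × (Fin k → ℝ) → ℝ) (hh : Measurable h)
    (hint1 : Integrable (fun ω => h (Y1 ω, X ω)) μ)
    (hint0 : Integrable (fun ω => h (Y0 ω, X ω)) μ) :
    (∫ ω, (T ω * δ ω / (p (X ω) * (μ {ω' | Q ω ≤ C ω'}).toReal)) * h (Q ω, X ω) ∂μ)
        = (∫ ω, h (Y1 ω, X ω) ∂μ) ∧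
    (∫ ω, ((1 - T ω) * δ ω / ((1 - p (X ω)) * (μ {ω' | Q ω ≤ C ω'}).toReal)) * h (Q ω, X ω) ∂μ)
        = (∫ ω, h (Y0 ω, X ω) ∂μ) := by
  have hm := sup_le hX.comap_le (hY0.prodMk hY1).comap_le
  set m := MeasurableSpace.comap X inferInstance ⊔
    MeasurableSpace.comap (fun ω => (Y0 ω, Y1 ω)) inferInstance
  have hXm : Measurable[m] X := measurable_iff_comap_le.2 le_sup_left
  have hYm : Measurable[m] fun ω => (Y0 ω, Y1 ω) := measurable_iff_comap_le.2 le_sup_right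
  have hce1 : (fun ω => p (X ω)) =ᵐ[μ] μ[T | m] :=
    hpX.trans (hunconf.condExp_sup_comap_ae_eq hX (hY0.prodMk hY1) hT hT01).symm
  have hce0 : (fun ω => 1 - p (X ω)) =ᵐ[μ] μ[fun ω => 1 - T ω | m] := by
    filter_upwards [hce1,
      condExp_sub (integrable_const 1) (integrable_of_forall_eq_zero_or_eq_one hT hT01) m]
      with ω h1 h2
    rw [show (fun ω => 1 - T ω) = (fun _ => (1 : ℝ)) - T from rfl, h2, Pi.sub_apply,
      condExp_const hm, h1]
  have hindep1 : IndepFun C (fun ω => (Y1 ω, T ω, X ω)) μ :=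
    hindep.comp (ψ := fun z : ℝ × ℝ × ℝ × (Fin k → ℝ) => (z.2.1, z.2.2.1, z.2.2.2))
      measurable_id (by fun_prop)
  have hindep0 : IndepFun C (fun ω => (Y0 ω, 1 - T ω, X ω)) μ :=
    hindep.comp (ψ := fun z : ℝ × ℝ × ℝ × (Fin k → ℝ) => (z.1, 1 - z.2.2.1, z.2.2.2))
      measurable_id (by fun_prop)
  constructor
  · exact integral_ipw_ipcw_eq (μ := μ) (A := T) (Ys := Y1) (q := p) hm hXm hT hT01 hYm.snd
      (fun ω h1 => by simp [hY, h1]) hp hε (hoverlap.mono fun _ h => h.1) hce1 hC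
      hindep1 hpos1 hQ hδ hh hint1
  · exact integral_ipw_ipcw_eq (μ := μ) (A := fun ω => 1 - T ω) (Ys := Y0) (q := fun x => 1 - p x)
      hm hXm (measurable_const.sub hT) (fun ω => by rcases hT01 ω with h | h <;> simp [h])
      hYm.fst (fun ω h1 => by simp [hY, show T ω = 0 by linarith]) (measurable_const.sub hp) hε
      (hoverlap.mono fun _ h => by linarith [h.2]) hce0 hC
      hindep0 hpos0 hQ hδ hh hint0

/-- **Joint identification under selection on observables and independent censoring.**
Under unconfoundedness and overlap, if moreover `C` is independent of the quadruple
`(Y(0), Y(1), T, X)` and `S_C(Y(1)) > 0`, `S_C(Y(0)) > 0` a.s., then with `Q = min(Y, C)`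
and `δ = 1{Y ≤ C}`, for every measurable `h` with `h(Y(1), X)` and `h(Y(0), X)` integrable,
`E[(T·δ/(p(X)·S_C(Q)))·h(Q, X)] = E[h(Y(1), X)]` and
`E[((1−T)·δ/((1−p(X))·S_C(Q)))·h(Q, X)] = E[h(Y(0), X)]`. -/
theorem ipw_ipcw_joint_identification
    {Ω : Type*} [MeasurableSpace Ω] [StandardBorelSpace Ω] [Nonempty Ω]
    (μ : Measure Ω) [IsProbabilityMeasure μ] {k : ℕ}
    (X : Ω → (Fin k → ℝ)) (hX : Measurable X)
    (T : Ω → ℝ) (hT : Measurable T) (hT01 : ∀ ω, T ω = 0 ∨ T ω = 1)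
    (Y0 Y1 Y : Ω → ℝ) (hY0 : Measurable Y0) (hY1 : Measurable Y1)
    (hY : ∀ ω, Y ω = T ω * Y1 ω + (1 - T ω) * Y0 ω)
    (hunconf : CondIndepFun (MeasurableSpace.comap X inferInstance) hX.comap_le
      (fun ω => (Y0 ω, Y1 ω)) T μ)
    (ε : ℝ) (hε : 0 < ε) (hε2 : ε ≤ 1 / 2)
    (p : (Fin k → ℝ) → ℝ) (hp : Measurable p)
    (hpX : (fun ω => p (X ω)) =ᵐ[μ] μ[T | MeasurableSpace.comap X inferInstance])
    (hoverlap : ∀ᵐ ω ∂μ, ε ≤ p (X ω) ∧ p (X ω) ≤ 1 - ε)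
    (C : Ω → ℝ) (hC : Measurable C)
    (hindep : IndepFun C (fun ω => (Y0 ω, Y1 ω, T ω, X ω)) μ)
    (hpos1 : ∀ᵐ ω ∂μ, 0 < (μ {ω' | Y1 ω ≤ C ω'}).toReal)
    (hpos0 : ∀ᵐ ω ∂μ, 0 < (μ {ω' | Y0 ω ≤ C ω'}).toReal)
    (Q : Ω → ℝ) (hQ : ∀ ω, Q ω = min (Y ω) (C ω))
    (δ : Ω → ℝ) (hδ : ∀ ω, δ ω = if Y ω ≤ C ω then (1 : ℝ) else 0)
    (h : ℝ × (Fin k → ℝ) → ℝ) (hh : Measurable h)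
    (hint1 : Integrable (fun ω => h (Y1 ω, X ω)) μ)
    (hint0 : Integrable (fun ω => h (Y0 ω, X ω)) μ) :
    (∫ ω, (T ω * δ ω / (p (X ω) * (μ {ω' | Q ω ≤ C ω'}).toReal)) * h (Q ω, X ω) ∂μ)
        = (∫ ω, h (Y1 ω, X ω) ∂μ) ∧
    (∫ ω, ((1 - T ω) * δ ω / ((1 - p (X ω)) * (μ {ω' | Q ω ≤ C ω'}).toReal)) * h (Q ω, X ω) ∂μ)
        = (∫ ω, h (Y0 ω, X ω) ∂μ) :=
  ipw_ipcw_joint_identification_general μ X hX T hT hT01 Y0 Y1 Y hY0 hY1 hY hunconf ε hε p hp hpX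
    hoverlap C hC hindep hpos1 hpos0 Q hQ δ hδ h hh hint1 hint0
end

section
/- Characterization of the null of zero conditional distribution treatment effect without censoring (combination of the paper's Lemmas 1 and 2 with indicator weights): under unconfoundedness and overlap, the following are equivalent: (a) for every y ∈ ℝ, E[1{Y(1) ≤ y} | σ(X)] = E[1{Y(0) ≤ y} | σ(X)] ℙ-almost surely; (b) for every y ∈ ℝ and every x ∈ ℝ^k, E[(T / p(X) − (1 − T) / (1 − p(X))) · 1{Y ≤ y} · 1{X ≤ x}] = 0. -/
/-!
On `{T = 1}` the observed outcome is `Y(1)`, so `T · 1{Y ∈ B} = T · 1{Y(1) ∈ B}`, and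
unconfoundedness factors `E[T · 1{Y(1) ∈ B} | X] = p(X) · E[1{Y(1) ∈ B} | X]`. Overlap makes
`1 / p(X)` a bounded `σ(X)`-measurable factor, so it can be pulled out of the conditional
expectation and cancels: `E[T / p(X) · 1{Y ∈ B} · 1_A] = E[1{Y(1) ∈ B} · 1_A]` for every
`A ∈ σ(X)`, and symmetrically for the control arm. Hence (b) says that the two conditional
distribution functions have the same integral over every orthant `{X ≤ x}`. These orthants form a
π-system that generates `σ(X)` and exhausts `Ω`, so the integrals over all of `σ(X)` agree, which
is (a) by uniqueness of conditional expectations.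
-/

open MeasureTheory ProbabilityTheory Set Filter Topology

theorem MeasurableSpace.pi_eq_generateFrom_Iic {ι : Type*} [Finite ι] :
    (MeasurableSpace.pi : MeasurableSpace (ι → ℝ)) = MeasurableSpace.generateFrom (range Iic) := by
  have hspan : IsCountablySpanning (range (Iic : ℝ → Set ℝ)) :=
    ⟨fun n : ℕ => Iic (n : ℝ), fun n => ⟨n, rfl⟩,
      eq_univ_of_forall fun x => mem_iUnion.2 ⟨⌈x⌉₊, Nat.le_ceil x⟩⟩
  rw [← generateFrom_eq_pi (fun _ => (borel_eq_generateFrom_Iic ℝ).symm) fun _ => hspan]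
  congr 1
  ext s
  constructor
  · rintro ⟨t, ht, rfl⟩
    choose x hx using fun i => ht i (mem_univ i)
    exact ⟨x, (pi_univ_Iic x).symm.trans (congrArg _ (funext hx))⟩
  · rintro ⟨x, rfl⟩
    exact ⟨fun i => Iic (x i), fun i _ => ⟨x i, rfl⟩, pi_univ_Iic x⟩

theorem isPiSystem_pi_Iic {ι : Type*} : IsPiSystem (range (Iic : (ι → ℝ) → Set (ι → ℝ))) := by
  rintro _ ⟨a, rfl⟩ _ ⟨b, rfl⟩ -
  exact ⟨a ⊓ b, Iic_inter_Iic.symm⟩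

theorem comap_eq_generateFrom_preimage_Iic {Ω ι : Type*} [Finite ι] (X : Ω → ι → ℝ) :
    MeasurableSpace.comap X inferInstance =
      MeasurableSpace.generateFrom (preimage X '' range Iic) := by
  rw [MeasurableSpace.pi_eq_generateFrom_Iic, MeasurableSpace.comap_generateFrom]

section OrthantIntegrals

variable {Ω E : Type*} [NormedAddCommGroup E] [NormedSpace ℝ E]

theorem setIntegral_eq_setIntegral_of_isPiSystem {m m₀ : MeasurableSpace Ω} (hm : m ≤ m₀)
    {μ : Measure Ω} {S : Set (Set Ω)} (h_eq : m = MeasurableSpace.generateFrom S)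
    (h_inter : IsPiSystem S) {f g : Ω → E} (hf : Integrable f μ) (hg : Integrable g μ)
    (basic : ∀ t ∈ S, ∫ ω in t, f ω ∂μ = ∫ ω in t, g ω ∂μ)
    (h_univ : ∫ ω, f ω ∂μ = ∫ ω, g ω ∂μ) {t : Set Ω} (ht : MeasurableSet[m] t) :
    ∫ ω in t, f ω ∂μ = ∫ ω in t, g ω ∂μ := by
  induction t, ht using MeasurableSpace.induction_on_inter h_eq h_inter with
  | empty => simp
  | basic t ht => exact basic t ht
  | compl t ht h =>
    rw [← add_right_inj (∫ ω in t, f ω ∂μ), integral_add_compl (hm t ht) hf, h,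
      integral_add_compl (hm t ht) hg, h_univ]
  | iUnion t hdisj ht h =>
    rw [integral_iUnion (fun i => hm _ (ht i)) hdisj hf.integrableOn,
      integral_iUnion (fun i => hm _ (ht i)) hdisj hg.integrableOn]
    simp only [h]

variable {ι : Type*} [Finite ι] [MeasurableSpace Ω] {μ : Measure Ω} {X : Ω → ι → ℝ}
  {f g : Ω → E}

theorem integral_eq_of_forall_setIntegral_preimage_Iic_eq (hX : Measurable X)
    (hf : Integrable f μ) (hg : Integrable g μ)
    (h : ∀ x, ∫ ω in X ⁻¹' Iic x, f ω ∂μ = ∫ ω in X ⁻¹' Iic x, g ω ∂μ) :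
    ∫ ω, f ω ∂μ = ∫ ω, g ω ∂μ := by
  have h_mono : Monotone fun n : ℕ => X ⁻¹' Iic (fun _ => (n : ℝ)) :=
    fun a b hab => preimage_mono (Iic_subset_Iic.2 fun _ => Nat.cast_le.2 hab)
  have h_union : ⋃ n : ℕ, X ⁻¹' Iic (fun _ => (n : ℝ)) = univ := by
    refine eq_univ_of_forall fun ω => mem_iUnion.2 ?_
    obtain ⟨n, hn⟩ := Finite.exists_le fun i => ⌈X ω i⌉₊
    exact ⟨n, fun i => (Nat.le_ceil _).trans (Nat.cast_le.2 (hn i))⟩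
  have h_tendsto (φ : Ω → E) (hφ : Integrable φ μ) :
      Tendsto (fun n : ℕ => ∫ ω in X ⁻¹' Iic (fun _ => (n : ℝ)), φ ω ∂μ) atTop
        (𝓝 (∫ ω, φ ω ∂μ)) := by
    simpa [h_union] using tendsto_setIntegral_of_monotone
      (fun n => hX measurableSet_Iic) h_mono hφ.integrableOn
  exact tendsto_nhds_unique (by simpa only [h] using h_tendsto f hf) (h_tendsto g hg)

theorem setIntegral_eq_of_forall_setIntegral_preimage_Iic_eq (hX : Measurable X)
    (hf : Integrable f μ) (hg : Integrable g μ)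
    (h : ∀ x, ∫ ω in X ⁻¹' Iic x, f ω ∂μ = ∫ ω in X ⁻¹' Iic x, g ω ∂μ) {t : Set Ω}
    (ht : MeasurableSet[MeasurableSpace.comap X inferInstance] t) :
    ∫ ω in t, f ω ∂μ = ∫ ω in t, g ω ∂μ :=
  setIntegral_eq_setIntegral_of_isPiSystem hX.comap_le (comap_eq_generateFrom_preimage_Iic X)
    (isPiSystem_pi_Iic.comap X) hf hg (by rintro _ ⟨_, ⟨x, rfl⟩, rfl⟩; exact h x)
    (integral_eq_of_forall_setIntegral_preimage_Iic_eq hX hf hg h) ht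

theorem condExp_comap_ae_eq_iff_forall_setIntegral_preimage_Iic_eq [CompleteSpace E]
    [IsFiniteMeasure μ] (hX : Measurable X) (hf : Integrable f μ) (hg : Integrable g μ) :
    μ[f | MeasurableSpace.comap X inferInstance] =ᵐ[μ]
        μ[g | MeasurableSpace.comap X inferInstance] ↔
      ∀ x, ∫ ω in X ⁻¹' Iic x, f ω ∂μ = ∫ ω in X ⁻¹' Iic x, g ω ∂μ := by
  constructor
  · intro h x
    have hx : MeasurableSet[MeasurableSpace.comap X inferInstance] (X ⁻¹' Iic x) :=
      ⟨_, measurableSet_Iic, rfl⟩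
    rw [← setIntegral_condExp hX.comap_le hf hx, ← setIntegral_condExp hX.comap_le hg hx]
    exact setIntegral_congr_ae (hX.comap_le _ hx) (h.mono fun ω hω _ => hω)
  · intro h
    refine ae_eq_condExp_of_forall_setIntegral_eq hX.comap_le hg
      (fun _ _ _ => integrable_condExp.integrableOn) (fun t ht _ => ?_)
      stronglyMeasurable_condExp.aestronglyMeasurable
    rw [setIntegral_condExp hX.comap_le hf ht]
    exact setIntegral_eq_of_forall_setIntegral_preimage_Iic_eq hX hf hg h ht

end OrthantIntegrals

section InverseProbabilityWeighting

variable {Ω : Type*} {m mΩ : MeasurableSpace Ω} {μ : Measure Ω}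

theorem MeasureTheory.Integrable.div_of_le {g e : Ω → ℝ} {ε : ℝ} (hg : Integrable g μ)
    (hε : 0 < ε) (he : AEStronglyMeasurable e μ) (he_ge : ∀ᵐ ω ∂μ, ε ≤ e ω) :
    Integrable (fun ω => g ω / e ω) μ := by
  simp only [div_eq_mul_inv]
  refine hg.mul_bdd (c := ε⁻¹) he.inv₀ (he_ge.mono fun ω hω => ?_)
  rw [norm_inv, Real.norm_of_nonneg (hε.le.trans hω)]
  exact inv_anti₀ hε hω

theorem integrable_mul_indicator_of_mem_zero_one [IsFiniteMeasure μ] {T : Ω → ℝ}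
    (hT : Measurable T) (hT01 : ∀ ω, T ω = 0 ∨ T ω = 1) {s : Set Ω} (hs : MeasurableSet s) :
    Integrable (T * s.indicator 1) μ :=
  ((integrable_const (1 : ℝ)).indicator hs).bdd_mul (c := 1) hT.aestronglyMeasurable
    (ae_of_all _ fun ω => by rcases hT01 ω with h | h <;> simp [h])

theorem ipw_mul_indicator_preimage_eq {T Y₀ Y₁ Y e : Ω → ℝ} (hT01 : ∀ ω, T ω = 0 ∨ T ω = 1)
    (hY : ∀ ω, Y ω = T ω * Y₁ ω + (1 - T ω) * Y₀ ω) (B : Set ℝ) (ω : Ω) :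
    (T ω / e ω - (1 - T ω) / (1 - e ω)) * (Y ⁻¹' B).indicator 1 ω =
      T ω * (Y₁ ⁻¹' B).indicator 1 ω / e ω -
        (1 - T ω) * (Y₀ ⁻¹' B).indicator 1 ω / (1 - e ω) := by
  classical
  rcases hT01 ω with h | h <;> simp [indicator_apply, hY ω, h] <;> split_ifs <;> ring

theorem setIntegral_mul_div_eq_of_condExp_mul (hm : m ≤ mΩ) [IsFiniteMeasure μ]
    {T f e : Ω → ℝ} {ε : ℝ} (hε : 0 < ε) (he : e =ᵐ[μ] μ[T | m]) (he_ge : ∀ᵐ ω ∂μ, ε ≤ e ω)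
    (hTf : Integrable (T * f) μ) (hf : Integrable f μ)
    (hmul : μ[T * f | m] =ᵐ[μ] μ[T | m] * μ[f | m]) {A : Set Ω} (hA : MeasurableSet[m] A) :
    ∫ ω in A, T ω * f ω / e ω ∂μ = ∫ ω in A, f ω ∂μ := by
  have he_meas : AEStronglyMeasurable[m] e μ :=
    stronglyMeasurable_condExp.aestronglyMeasurable.congr he.symm
  have he_pos : ∀ᵐ ω ∂μ, 0 < e ω := he_ge.mono fun ω hω => hε.trans_le hω
  have h_int : Integrable (e⁻¹ * (T * f)) μ := by
    have := hTf.div_of_le hε (he_meas.mono hm) he_ge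
    simp only [div_eq_inv_mul] at this
    exact this
  calc ∫ ω in A, T ω * f ω / e ω ∂μ = ∫ ω in A, (e⁻¹ * (T * f)) ω ∂μ := by
        simp only [Pi.mul_apply, Pi.inv_apply, div_eq_inv_mul]
    _ = ∫ ω in A, (μ[e⁻¹ * (T * f) | m]) ω ∂μ := (setIntegral_condExp hm h_int hA).symm
    _ = ∫ ω in A, (μ[f | m]) ω ∂μ := by
        refine setIntegral_congr_ae (hm A hA) ?_
        filter_upwards [condExp_mul_of_aestronglyMeasurable_left he_meas.inv₀ h_int hTf, hmul,
          he, he_pos] with ω h_pull h_mul he_eq he_pos _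
        rw [h_pull, Pi.mul_apply, h_mul, Pi.mul_apply, ← he_eq, Pi.inv_apply,
          inv_mul_cancel_left₀ he_pos.ne']
    _ = ∫ ω in A, f ω ∂μ := setIntegral_condExp hm hf hA

variable [StandardBorelSpace Ω] {hm : m ≤ mΩ} [IsFiniteMeasure μ] {β : Type*} [MeasurableSpace β]

theorem condExp_mul_indicator_ae_eq_of_condIndepFun {Z : Ω → β} {T : Ω → ℝ}
    (hZ : Measurable Z) (hT : Measurable T) (hT01 : ∀ ω, T ω = 0 ∨ T ω = 1)
    (h : CondIndepFun m hm Z T μ) {B : Set β} (hB : MeasurableSet B) :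
    μ[T * (Z ⁻¹' B).indicator 1 | m] =ᵐ[μ] μ[T | m] * μ[(Z ⁻¹' B).indicator 1 | m] := by
  have hT_ind : (T ⁻¹' {1}).indicator 1 = T :=
    funext fun ω => by rcases hT01 ω with h | h <;> simp [h]
  have h_inter := (condIndepFun_iff_condExp_inter_preimage_eq_mul hZ hT).1 h B {1} hB
    (measurableSet_singleton 1)
  rw [← Pi.one_def, inter_comm, inter_indicator_one, hT_ind] at h_inter
  filter_upwards [h_inter] with ω hω
  simpa only [Pi.mul_apply, mul_comm (μ[T | m] ω)] using hω

theorem setIntegral_mul_indicator_div_eq_of_condIndepFun {Z : Ω → β} {T e : Ω → ℝ}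
    (hZ : Measurable Z) (hT : Measurable T) (hT01 : ∀ ω, T ω = 0 ∨ T ω = 1)
    (h : CondIndepFun m hm Z T μ) {ε : ℝ} (hε : 0 < ε) (he : e =ᵐ[μ] μ[T | m])
    (he_ge : ∀ᵐ ω ∂μ, ε ≤ e ω) {B : Set β} (hB : MeasurableSet B) {A : Set Ω}
    (hA : MeasurableSet[m] A) :
    ∫ ω in A, T ω * (Z ⁻¹' B).indicator 1 ω / e ω ∂μ = ∫ ω in A, (Z ⁻¹' B).indicator 1 ω ∂μ :=
  setIntegral_mul_div_eq_of_condExp_mul hm hε he he_ge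
    (integrable_mul_indicator_of_mem_zero_one hT hT01 (hZ hB))
    ((integrable_const 1).indicator (hZ hB))
    (condExp_mul_indicator_ae_eq_of_condIndepFun hZ hT hT01 h hB) hA

theorem setIntegral_ipw_mul_indicator_preimage_eq {T Y₀ Y₁ Y e : Ω → ℝ} (hT : Measurable T)
    (hT01 : ∀ ω, T ω = 0 ∨ T ω = 1) (hY₀ : Measurable Y₀) (hY₁ : Measurable Y₁)
    (hY : ∀ ω, Y ω = T ω * Y₁ ω + (1 - T ω) * Y₀ ω)
    (hunconf : CondIndepFun m hm (fun ω => (Y₀ ω, Y₁ ω)) T μ) {ε : ℝ} (hε : 0 < ε)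
    (he : e =ᵐ[μ] μ[T | m]) (hoverlap : ∀ᵐ ω ∂μ, ε ≤ e ω ∧ e ω ≤ 1 - ε)
    {B : Set ℝ} (hB : MeasurableSet B) {A : Set Ω} (hA : MeasurableSet[m] A) :
    ∫ ω in A, (T ω / e ω - (1 - T ω) / (1 - e ω)) * (Y ⁻¹' B).indicator 1 ω ∂μ =
      ∫ ω in A, (Y₁ ⁻¹' B).indicator 1 ω ∂μ - ∫ ω in A, (Y₀ ⁻¹' B).indicator 1 ω ∂μ := by
  have h1T01 (ω : Ω) : (1 - T) ω = 0 ∨ (1 - T) ω = 1 := by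
    rcases hT01 ω with h | h <;> simp [h]
  have hT_int : Integrable T μ := by
    simpa using integrable_mul_indicator_of_mem_zero_one (μ := μ) hT hT01 MeasurableSet.univ
  have h1e : 1 - e =ᵐ[μ] μ[1 - T | m] := by
    have h_sub := condExp_sub (m := m) (integrable_const (1 : ℝ)) hT_int
    rw [condExp_const hm] at h_sub
    filter_upwards [he, h_sub] with ω hω h_sub
    exact (congrArg (1 - ·) hω).trans h_sub.symm
  have he_ge : ∀ᵐ ω ∂μ, ε ≤ e ω := hoverlap.mono fun _ h => h.1
  have h1e_ge : ∀ᵐ ω ∂μ, ε ≤ (1 - e) ω :=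
    hoverlap.mono fun _ h => by rw [Pi.sub_apply, Pi.one_apply]; linarith [h.2]
  have he_meas : AEStronglyMeasurable e μ :=
    (stronglyMeasurable_condExp.aestronglyMeasurable.congr he.symm).mono hm
  have h_int₁ : Integrable (fun ω => T ω * (Y₁ ⁻¹' B).indicator 1 ω / e ω) μ :=
    (integrable_mul_indicator_of_mem_zero_one hT hT01 (hY₁ hB)).div_of_le hε he_meas he_ge
  have h_int₀ : Integrable (fun ω => (1 - T ω) * (Y₀ ⁻¹' B).indicator 1 ω / (1 - e ω)) μ :=
    (integrable_mul_indicator_of_mem_zero_one (measurable_one.sub hT) h1T01 (hY₀ hB)).div_of_le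
      hε (aestronglyMeasurable_one.sub he_meas) h1e_ge
  simp only [ipw_mul_indicator_preimage_eq hT01 hY B]
  rw [integral_sub h_int₁.integrableOn h_int₀.integrableOn]
  congr 1
  · exact setIntegral_mul_indicator_div_eq_of_condIndepFun hY₁ hT hT01
      (hunconf.comp measurable_snd measurable_id) hε he he_ge hB hA
  · exact setIntegral_mul_indicator_div_eq_of_condIndepFun hY₀ (measurable_one.sub hT) h1T01
      (hunconf.comp measurable_fst (measurable_const.sub measurable_id)) hε h1e h1e_ge hB hA

end InverseProbabilityWeighting

theorem zero_conditional_DTE_characterization_general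
    {Ω : Type*} [MeasurableSpace Ω] [StandardBorelSpace Ω]
    (μ : Measure Ω) [IsProbabilityMeasure μ] {k : ℕ}
    (X : Ω → (Fin k → ℝ)) (hX : Measurable X)
    (T : Ω → ℝ) (hT : Measurable T) (hT01 : ∀ ω, T ω = 0 ∨ T ω = 1)
    (Y0 Y1 Y : Ω → ℝ) (hY0 : Measurable Y0) (hY1 : Measurable Y1)
    (hY : ∀ ω, Y ω = T ω * Y1 ω + (1 - T ω) * Y0 ω)
    (hunconf : CondIndepFun (MeasurableSpace.comap X inferInstance) hX.comap_le
      (fun ω => (Y0 ω, Y1 ω)) T μ)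
    (ε : ℝ) (hε : 0 < ε)
    (p : (Fin k → ℝ) → ℝ)
    (hpX : (fun ω => p (X ω)) =ᵐ[μ] μ[T | MeasurableSpace.comap X inferInstance])
    (hoverlap : ∀ᵐ ω ∂μ, ε ≤ p (X ω) ∧ p (X ω) ≤ 1 - ε) :
    (∀ y : ℝ,
        μ[(fun ω => if Y1 ω ≤ y then (1 : ℝ) else 0) | MeasurableSpace.comap X inferInstance]
          =ᵐ[μ]
        μ[(fun ω => if Y0 ω ≤ y then (1 : ℝ) else 0) | MeasurableSpace.comap X inferInstance])
      ↔
    (∀ (y : ℝ) (x : Fin k → ℝ),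
        (∫ ω, (T ω / p (X ω) - (1 - T ω) / (1 - p (X ω)))
            * (if Y ω ≤ y then (1 : ℝ) else 0)
            * (if ∀ j, X ω j ≤ x j then (1 : ℝ) else 0) ∂μ) = 0) := by
  classical
  have h_ite (Z : Ω → ℝ) (y : ℝ) :
      (fun ω => if Z ω ≤ y then (1 : ℝ) else 0) = (Z ⁻¹' Iic y).indicator 1 := by
    ext ω; simp [indicator_apply]
  have h_ipw (y : ℝ) (x : Fin k → ℝ) :
      ∫ ω, (T ω / p (X ω) - (1 - T ω) / (1 - p (X ω))) * (if Y ω ≤ y then (1 : ℝ) else 0)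
          * (if ∀ j, X ω j ≤ x j then (1 : ℝ) else 0) ∂μ =
        ∫ ω in X ⁻¹' Iic x, (Y1 ⁻¹' Iic y).indicator 1 ω ∂μ -
          ∫ ω in X ⁻¹' Iic x, (Y0 ⁻¹' Iic y).indicator 1 ω ∂μ := by
    rw [← setIntegral_ipw_mul_indicator_preimage_eq hT hT01 hY0 hY1 hY hunconf hε hpX hoverlap
      measurableSet_Iic ⟨_, measurableSet_Iic, rfl⟩, ← integral_indicator (hX measurableSet_Iic)]
    congr 1 with ω
    simp [indicator_apply, Pi.le_def, mul_comm]
  simp_rw [h_ipw, sub_eq_zero, h_ite]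
  exact forall_congr' fun y => condExp_comap_ae_eq_iff_forall_setIntegral_preimage_Iic_eq hX
    ((integrable_const 1).indicator (hY1 measurableSet_Iic))
    ((integrable_const 1).indicator (hY0 measurableSet_Iic))

/-- **Characterization of the null of zero conditional distribution treatment effect,
no censoring** (combination of the paper's Lemmas 1 and 2 with indicator weights):
under unconfoundedness and overlap, `E[1{Y(1) ≤ y} | σ(X)] = E[1{Y(0) ≤ y} | σ(X)]` a.s.
for all `y` iff `E[(T/p(X) − (1−T)/(1−p(X))) · 1{Y ≤ y} · 1{X ≤ x}] = 0` for all `y, x`. -/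
theorem zero_conditional_DTE_characterization
    {Ω : Type*} [MeasurableSpace Ω] [StandardBorelSpace Ω] [Nonempty Ω]
    (μ : Measure Ω) [IsProbabilityMeasure μ] {k : ℕ}
    (X : Ω → (Fin k → ℝ)) (hX : Measurable X)
    (T : Ω → ℝ) (hT : Measurable T) (hT01 : ∀ ω, T ω = 0 ∨ T ω = 1)
    (Y0 Y1 Y : Ω → ℝ) (hY0 : Measurable Y0) (hY1 : Measurable Y1)
    (hY : ∀ ω, Y ω = T ω * Y1 ω + (1 - T ω) * Y0 ω)
    (hunconf : CondIndepFun (MeasurableSpace.comap X inferInstance) hX.comap_le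
      (fun ω => (Y0 ω, Y1 ω)) T μ)
    (ε : ℝ) (hε : 0 < ε) (hε2 : ε ≤ 1 / 2)
    (p : (Fin k → ℝ) → ℝ) (hp : Measurable p)
    (hpX : (fun ω => p (X ω)) =ᵐ[μ] μ[T | MeasurableSpace.comap X inferInstance])
    (hoverlap : ∀ᵐ ω ∂μ, ε ≤ p (X ω) ∧ p (X ω) ≤ 1 - ε) :
    (∀ y : ℝ,
        μ[(fun ω => if Y1 ω ≤ y then (1 : ℝ) else 0) | MeasurableSpace.comap X inferInstance]
          =ᵐ[μ]
        μ[(fun ω => if Y0 ω ≤ y then (1 : ℝ) else 0) | MeasurableSpace.comap X inferInstance])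
      ↔
    (∀ (y : ℝ) (x : Fin k → ℝ),
        (∫ ω, (T ω / p (X ω) - (1 - T ω) / (1 - p (X ω)))
            * (if Y ω ≤ y then (1 : ℝ) else 0)
            * (if ∀ j, X ω j ≤ x j then (1 : ℝ) else 0) ∂μ) = 0) :=
  zero_conditional_DTE_characterization_general μ X hX T hT hT01 Y0 Y1 Y hY0 hY1 hY hunconf ε hε p
    hpX hoverlap
end

section
/- Characterization of the null of homogeneous restricted conditional average treatment effect without censoring (the identification underlying the paper's Theorem 6): under unconfoundedness and overlap, assume in addition Y(0) ≥ 0 and Y(1) ≥ 0 ℙ-almost surely, fix τ̄ ∈ ℝ, and let Δ := E[(T / p(X) − (1 − T) / (1 − p(X))) · Y · 1{Y ≤ τ̄}]. Then there exists a constant c ∈ ℝ with E[Y(1)·1{Y(1) ≤ τ̄} | σ(X)] − E[Y(0)·1{Y(0) ≤ τ̄} | σ(X)] = c ℙ-almost surely if and only if for every x ∈ ℝ^k, E[(T / p(X) − (1 − T) / (1 − p(X))) · Y · 1{Y ≤ τ̄} · 1{X ≤ x}] = Δ · ℙ(X ≤ x). -/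
/-!
Unconfoundedness makes the treatment indicator conditionally independent of any function `W` of
the potential outcomes, so `E[T·W | X] = p(X)·E[W | X]`. Inverse propensity weighting therefore
turns the truncated realized outcome into a variable whose conditional expectation given `X` is the
restricted CATE `D = E[Y(1)·1{Y(1) ≤ τ̄} | X] - E[Y(0)·1{Y(0) ≤ τ̄} | X]`; in particular `Δ = E[D]`
and the left-hand side of the moment condition at `x` is `E[D·1{X ≤ x}]`. The moment conditions
thus say that `D` and the constant `Δ` have the same integral over every set `{X ≤ x}` and over the
whole space. These sets form a π-system generating `σ(X)`, so by Dynkin's π-λ theorem the integrals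
agree on all of `σ(X)`, and `D = Δ` almost surely.
-/

open MeasureTheory ProbabilityTheory Set

theorem CondIndepFun.condExp_mul_ae_eq {Ω : Type*} {m mΩ : MeasurableSpace Ω}
    [StandardBorelSpace Ω] {hm : m ≤ mΩ} {μ : Measure Ω} [IsFiniteMeasure μ] {f g : Ω → ℝ}
    (hfg : CondIndepFun m hm f g μ) (hf : Measurable f) (hg : Measurable g)
    (hfi : Integrable f μ) (hgi : Integrable g μ) (hfgi : Integrable (f * g) μ) :
    μ[f * g | m] =ᵐ[μ] μ[f | m] * μ[g | m] := by
  -- for a.e. `ω`, the conditional law of `(f, g)` is the product of those of `f` and `g`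
  have hprod := ae_of_ae_trim hm ((condIndepFun_iff_map_prod_eq_prod_map_map hf hg).mp hfg)
  filter_upwards [hprod, condExp_ae_eq_integral_condExpKernel hm hfgi,
    condExp_ae_eq_integral_condExpKernel hm hfi, condExp_ae_eq_integral_condExpKernel hm hgi]
    with ω hω hfgω hfω hgω
  rw [hfgω, Pi.mul_apply, hfω, hgω]
  set κ := condExpKernel μ m
  calc ∫ y, (f * g) y ∂κ ω
      = ∫ z, z.1 * z.2 ∂(κ ω).map (fun y => (f y, g y)) :=
        (integral_map (hf.prodMk hg).aemeasurable
          (continuous_fst.mul continuous_snd).aestronglyMeasurable).symm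
    _ = ∫ z, z.1 * z.2 ∂((κ ω).map f).prod ((κ ω).map g) := by
        rw [← Kernel.map_apply _ (hf.prodMk hg), hω, Kernel.prod_apply, Kernel.map_apply _ hf,
          Kernel.map_apply _ hg]
    _ = (∫ a, a ∂(κ ω).map f) * ∫ b, b ∂(κ ω).map g := integral_prod_mul (L := ℝ) id id
    _ = (∫ y, f y ∂κ ω) * ∫ y, g y ∂κ ω := by
        rw [integral_map hf.aemeasurable (f := fun a => a) aestronglyMeasurable_id,
          integral_map hg.aemeasurable (f := fun a => a) aestronglyMeasurable_id]

section InversePropensityWeighting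

variable {Ω : Type*} {m mΩ : MeasurableSpace Ω} {μ : Measure Ω}

lemma MeasureTheory.Integrable.inv_mul_of_le {f q : Ω → ℝ} {ε : ℝ} (hf : Integrable f μ)
    (hq : AEStronglyMeasurable q μ) (hε : 0 < ε) (hqε : ∀ᵐ ω ∂μ, ε ≤ q ω) :
    Integrable (fun ω => (q ω)⁻¹ * f ω) μ := by
  refine hf.bdd_mul (c := ε⁻¹) hq.aemeasurable.inv.aestronglyMeasurable ?_
  filter_upwards [hqε] with ω hω
  rw [norm_inv, Real.norm_of_nonneg (hε.le.trans hω)]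
  exact inv_anti₀ hε hω

lemma MeasureTheory.Integrable.mul_of_mem_zero_one {f T : Ω → ℝ} (hf : Integrable f μ)
    (hT : Measurable T) (hT01 : ∀ ω, T ω = 0 ∨ T ω = 1) : Integrable (fun ω => T ω * f ω) μ :=
  hf.bdd_mul (c := 1) hT.aestronglyMeasurable <| .of_forall fun ω => by
    rcases hT01 ω with h | h <;> simp [h]

lemma integrable_of_mem_zero_one [IsFiniteMeasure μ] {T : Ω → ℝ} (hT : Measurable T)
    (hT01 : ∀ ω, T ω = 0 ∨ T ω = 1) : Integrable T μ := by
  simpa using (integrable_const (1 : ℝ)).mul_of_mem_zero_one (μ := μ) hT hT01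

lemma Measurable.mul_ite_le {Z : Ω → ℝ} (hZ : Measurable Z) (τ : ℝ) :
    Measurable fun ω => Z ω * if Z ω ≤ τ then 1 else 0 :=
  hZ.mul (Measurable.ite (measurableSet_le hZ measurable_const) measurable_const measurable_const)

lemma integrable_mul_ite_le [IsFiniteMeasure μ] {Z : Ω → ℝ} (hZ : Measurable Z)
    (hZ0 : ∀ᵐ ω ∂μ, 0 ≤ Z ω) (τ : ℝ) :
    Integrable (fun ω => Z ω * if Z ω ≤ τ then 1 else 0) μ := by
  refine .of_bound (C := max τ 0) (hZ.mul_ite_le τ).aestronglyMeasurable ?_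
  filter_upwards [hZ0] with ω hω
  split_ifs with h
  · simpa [abs_of_nonneg hω] using le_max_of_le_left h
  · simp

lemma integrable_inv_mul_mul {S W q : Ω → ℝ} {ε : ℝ} (hS : Measurable S)
    (hS01 : ∀ ω, S ω = 0 ∨ S ω = 1) (hW : Integrable W μ) (hq : AEStronglyMeasurable q μ)
    (hε : 0 < ε) (hqε : ∀ᵐ ω ∂μ, ε ≤ q ω) :
    Integrable (fun ω => (q ω)⁻¹ * (S ω * W ω)) μ :=
  (hW.mul_of_mem_zero_one hS hS01).inv_mul_of_le hq hε hqε

theorem condExp_inv_mul_mul_ae_eq [StandardBorelSpace Ω] [IsFiniteMeasure μ] {hm : m ≤ mΩ}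
    {S W q : Ω → ℝ} {ε : ℝ} (hSW : CondIndepFun m hm S W μ) (hS : Measurable S)
    (hS01 : ∀ ω, S ω = 0 ∨ S ω = 1) (hW : Measurable W) (hWi : Integrable W μ)
    (hq : StronglyMeasurable[m] q) (hqS : q =ᵐ[μ] μ[S | m]) (hε : 0 < ε)
    (hqε : ∀ᵐ ω ∂μ, ε ≤ q ω) :
    μ[fun ω => (q ω)⁻¹ * (S ω * W ω) | m] =ᵐ[μ] μ[W | m] := by
  have hSi : Integrable S μ := integrable_of_mem_zero_one hS hS01
  have hSWi : Integrable (S * W) μ := hWi.mul_of_mem_zero_one hS hS01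
  have hpull : μ[q⁻¹ * (S * W) | m] =ᵐ[μ] q⁻¹ * μ[S * W | m] :=
    condExp_mul_of_stronglyMeasurable_left hq.measurable.inv.stronglyMeasurable
      (integrable_inv_mul_mul hS hS01 hWi (hq.mono hm).aestronglyMeasurable hε hqε) hSWi
  filter_upwards [hpull, CondIndepFun.condExp_mul_ae_eq hSW hS hW hSi hWi hSWi, hqS, hqε]
    with ω hpull hprod hqω hqε
  simp only [Pi.mul_apply, Pi.inv_apply] at hpull hprod
  rw [show (fun ω => (q ω)⁻¹ * (S ω * W ω)) = q⁻¹ * (S * W) from rfl, hpull, hprod, ← hqω]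
  field_simp [(hε.trans_le hqε).ne']

lemma one_sub_eq_zero_or_one {t : ℝ} (ht : t = 0 ∨ t = 1) : 1 - t = 0 ∨ 1 - t = 1 := by
  rcases ht with rfl | rfl <;> norm_num

lemma ipw_mul_eq_sub {T Y₀ Y₁ Y q : Ω → ℝ} (hT01 : ∀ ω, T ω = 0 ∨ T ω = 1)
    (hY : ∀ ω, Y ω = T ω * Y₁ ω + (1 - T ω) * Y₀ ω) :
    (fun ω => (T ω / q ω - (1 - T ω) / (1 - q ω)) * Y ω)
      = (fun ω => (q ω)⁻¹ * (T ω * Y₁ ω)) - fun ω => (1 - q ω)⁻¹ * ((1 - T ω) * Y₀ ω) := by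
  ext ω
  rcases hT01 ω with h | h <;> simp only [Pi.sub_apply, hY, h] <;> ring

lemma integrable_ipw {T Y₀ Y₁ Y q : Ω → ℝ} {ε : ℝ} (hT : Measurable T)
    (hT01 : ∀ ω, T ω = 0 ∨ T ω = 1) (hY₀ : Integrable Y₀ μ) (hY₁ : Integrable Y₁ μ)
    (hY : ∀ ω, Y ω = T ω * Y₁ ω + (1 - T ω) * Y₀ ω) (hq : AEStronglyMeasurable q μ)
    (hε : 0 < ε) (hoverlap : ∀ᵐ ω ∂μ, ε ≤ q ω ∧ q ω ≤ 1 - ε) :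
    Integrable (fun ω => (T ω / q ω - (1 - T ω) / (1 - q ω)) * Y ω) μ := by
  rw [ipw_mul_eq_sub hT01 hY]
  exact (integrable_inv_mul_mul hT hT01 hY₁ hq hε (hoverlap.mono fun _ h => h.1)).sub
    (integrable_inv_mul_mul (S := fun ω => 1 - T ω) (q := fun ω => 1 - q ω)
      (measurable_const.sub hT) (fun ω => one_sub_eq_zero_or_one (hT01 ω)) hY₀
      (aestronglyMeasurable_const.sub hq) hε (hoverlap.mono fun _ h => by linarith [h.2]))

theorem condExp_ipw_ae_eq [StandardBorelSpace Ω] [IsFiniteMeasure μ] (hm : m ≤ mΩ)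
    {T Y₀ Y₁ Y q : Ω → ℝ} {ε : ℝ} (hT : Measurable T) (hT01 : ∀ ω, T ω = 0 ∨ T ω = 1)
    (hY₀ : Measurable Y₀) (hY₁ : Measurable Y₁) (hY₀i : Integrable Y₀ μ)
    (hY₁i : Integrable Y₁ μ) (hY : ∀ ω, Y ω = T ω * Y₁ ω + (1 - T ω) * Y₀ ω)
    (hunconf : CondIndepFun m hm (fun ω => (Y₀ ω, Y₁ ω)) T μ)
    (hq : StronglyMeasurable[m] q) (hqT : q =ᵐ[μ] μ[T | m]) (hε : 0 < ε)
    (hoverlap : ∀ᵐ ω ∂μ, ε ≤ q ω ∧ q ω ≤ 1 - ε) :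
    μ[fun ω => (T ω / q ω - (1 - T ω) / (1 - q ω)) * Y ω | m] =ᵐ[μ] μ[Y₁ | m] - μ[Y₀ | m] := by
  have hqm : AEStronglyMeasurable q μ := (hq.mono hm).aestronglyMeasurable
  have hq₁ : ∀ᵐ ω ∂μ, ε ≤ q ω := hoverlap.mono fun _ h => h.1
  have hq₀ : ∀ᵐ ω ∂μ, ε ≤ 1 - q ω := hoverlap.mono fun _ h => by linarith [h.2]
  have hT01' : ∀ ω, 1 - T ω = 0 ∨ 1 - T ω = 1 := fun ω => one_sub_eq_zero_or_one (hT01 ω)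
  have hTi : Integrable T μ := integrable_of_mem_zero_one hT hT01
  have hcontrol_mean : (fun ω => 1 - q ω) =ᵐ[μ] μ[fun ω => 1 - T ω | m] := by
    filter_upwards [hqT, condExp_sub (integrable_const 1) hTi m] with ω hω hsub
    rw [show (fun ω => 1 - T ω) = (fun _ => (1 : ℝ)) - T from rfl, hsub, Pi.sub_apply,
      condExp_const hm, hω]
  rw [ipw_mul_eq_sub hT01 hY]
  refine (condExp_sub (integrable_inv_mul_mul hT hT01 hY₁i hqm hε hq₁)
    (integrable_inv_mul_mul (S := fun ω => 1 - T ω) (measurable_const.sub hT) hT01' hY₀i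
      (aestronglyMeasurable_const.sub hqm) hε hq₀) m).trans (.sub ?_ ?_)
  · exact condExp_inv_mul_mul_ae_eq (hunconf.symm.comp measurable_id measurable_snd) hT hT01
      hY₁ hY₁i hq hqT hε hq₁
  · exact condExp_inv_mul_mul_ae_eq (hunconf.symm.comp (measurable_const.sub measurable_id)
      measurable_fst) (measurable_const.sub hT) hT01' hY₀ hY₀i
      (stronglyMeasurable_const.sub hq) hcontrol_mean hε hq₀

theorem setIntegral_ipw_eq [StandardBorelSpace Ω] [IsFiniteMeasure μ] (hm : m ≤ mΩ)
    {T Y₀ Y₁ Y q : Ω → ℝ} {ε : ℝ} (hT : Measurable T) (hT01 : ∀ ω, T ω = 0 ∨ T ω = 1)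
    (hY₀ : Measurable Y₀) (hY₁ : Measurable Y₁) (hY₀i : Integrable Y₀ μ)
    (hY₁i : Integrable Y₁ μ) (hY : ∀ ω, Y ω = T ω * Y₁ ω + (1 - T ω) * Y₀ ω)
    (hunconf : CondIndepFun m hm (fun ω => (Y₀ ω, Y₁ ω)) T μ)
    (hq : StronglyMeasurable[m] q) (hqT : q =ᵐ[μ] μ[T | m]) (hε : 0 < ε)
    (hoverlap : ∀ᵐ ω ∂μ, ε ≤ q ω ∧ q ω ≤ 1 - ε) {s : Set Ω} (hs : MeasurableSet[m] s) :
    ∫ ω in s, (T ω / q ω - (1 - T ω) / (1 - q ω)) * Y ω ∂μ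
      = ∫ ω in s, (μ[Y₁ | m] ω - μ[Y₀ | m] ω) ∂μ := by
  rw [← setIntegral_condExp hm (integrable_ipw hT hT01 hY₀i hY₁i hY
    (hq.mono hm).aestronglyMeasurable hε hoverlap) hs]
  exact setIntegral_congr_ae (hm s hs) <| (condExp_ipw_ae_eq hm hT hT01 hY₀ hY₁ hY₀i hY₁i hY
    hunconf hq hqT hε hoverlap).mono fun _ h _ => h

end InversePropensityWeighting

section PiSystem

variable {Ω : Type*} {m mΩ : MeasurableSpace Ω} {μ : Measure Ω} {S : Set (Set Ω)}

theorem setIntegral_eq_of_isPiSystem_s8 (hm : m ≤ mΩ) (h_eq : m = MeasurableSpace.generateFrom S)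
    (h_pi : IsPiSystem S) {f g : Ω → ℝ} (hf : Integrable f μ) (hg : Integrable g μ)
    (basic : ∀ t ∈ S, ∫ ω in t, f ω ∂μ = ∫ ω in t, g ω ∂μ)
    (h_univ : ∫ ω, f ω ∂μ = ∫ ω, g ω ∂μ) {t : Set Ω} (ht : MeasurableSet[m] t) :
    ∫ ω in t, f ω ∂μ = ∫ ω in t, g ω ∂μ := by
  induction t, ht using MeasurableSpace.induction_on_inter h_eq h_pi with
  | empty => simp
  | basic t ht => exact basic t ht
  | compl t ht h =>
    rw [setIntegral_compl (hm t ht) hf, setIntegral_compl (hm t ht) hg, h, h_univ]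
  | iUnion t hdisj ht h =>
    rw [integral_iUnion (fun i => hm _ (ht i)) hdisj hf.integrableOn,
      integral_iUnion (fun i => hm _ (ht i)) hdisj hg.integrableOn]
    exact tsum_congr h

theorem ae_eq_of_forall_setIntegral_eq_of_isPiSystem [IsFiniteMeasure μ] (hm : m ≤ mΩ)
    (h_eq : m = MeasurableSpace.generateFrom S) (h_pi : IsPiSystem S) {f g : Ω → ℝ}
    (hfm : StronglyMeasurable[m] f) (hgm : StronglyMeasurable[m] g)
    (hf : Integrable f μ) (hg : Integrable g μ)
    (basic : ∀ t ∈ S, ∫ ω in t, f ω ∂μ = ∫ ω in t, g ω ∂μ)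
    (h_univ : ∫ ω, f ω ∂μ = ∫ ω, g ω ∂μ) : f =ᵐ[μ] g :=
  have := isFiniteMeasure_trim (μ := μ) hm
  ae_eq_of_forall_setIntegral_eq_of_sigmaFinite' hm (fun _ _ _ => hf.integrableOn)
    (fun _ _ _ => hg.integrableOn)
    (fun _ ht _ => setIntegral_eq_of_isPiSystem_s8 hm h_eq h_pi hf hg basic h_univ ht)
    hfm.aestronglyMeasurable hgm.aestronglyMeasurable

end PiSystem

theorem MeasurableSpace.pi_eq_generateFrom_range_Iic {ι : Type*} [Finite ι] :
    (MeasurableSpace.pi : MeasurableSpace (ι → ℝ)) = generateFrom (range Iic) := by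
  have hspan : IsCountablySpanning (range (Iic : ℝ → Set ℝ)) :=
    ⟨fun n : ℕ => Iic (n : ℝ), fun n => mem_range_self _,
      iUnion_eq_univ_iff.2 fun y => (exists_nat_ge y).imp fun _ h => h⟩
  rw [← generateFrom_eq_pi (fun _ => (borel_eq_generateFrom_Iic ℝ).symm.trans
    BorelSpace.measurable_eq.symm) (fun _ => hspan)]
  congr 1
  ext s
  constructor
  · rintro ⟨t, ht, rfl⟩
    choose x hx using fun i => ht i (mem_univ i)
    exact ⟨x, by rw [← pi_univ_Iic]; exact pi_congr rfl fun i _ => hx i⟩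
  · rintro ⟨x, rfl⟩
    exact ⟨fun i => Iic (x i), fun i _ => mem_range_self _, pi_univ_Iic x⟩

theorem isPiSystem_preimage_Iic {Ω α : Type*} [SemilatticeInf α] (X : Ω → α) :
    IsPiSystem (preimage X '' range Iic) := by
  rintro _ ⟨_, ⟨a, rfl⟩, rfl⟩ _ ⟨_, ⟨b, rfl⟩, rfl⟩ -
  exact ⟨Iic (a ⊓ b), ⟨_, rfl⟩, by rw [← preimage_inter, Iic_inter_Iic]⟩

theorem exists_ae_eq_const_iff_forall_setIntegral_preimage_Iic {Ω ι : Type*}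
    [MeasurableSpace Ω] [Finite ι] {μ : Measure Ω} [IsProbabilityMeasure μ] {X : Ω → ι → ℝ}
    (hX : Measurable X) {D : Ω → ℝ}
    (hDm : StronglyMeasurable[MeasurableSpace.comap X inferInstance] D) (hD : Integrable D μ) :
    (∃ c : ℝ, D =ᵐ[μ] fun _ => c) ↔
      ∀ x, ∫ ω in X ⁻¹' Iic x, D ω ∂μ = (∫ ω, D ω ∂μ) * μ.real (X ⁻¹' Iic x) := by
  constructor
  · rintro ⟨c, hc⟩ x
    rw [setIntegral_congr_ae (hX measurableSet_Iic) (hc.mono fun _ h _ => h),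
      integral_congr_ae hc, setIntegral_const, smul_eq_mul, mul_comm]
    simp
  · intro h
    have hgen : MeasurableSpace.comap X inferInstance
        = MeasurableSpace.generateFrom (preimage X '' range Iic) := by
      rw [← MeasurableSpace.comap_generateFrom, ← MeasurableSpace.pi_eq_generateFrom_range_Iic]
    refine ⟨∫ ω, D ω ∂μ, ae_eq_of_forall_setIntegral_eq_of_isPiSystem hX.comap_le hgen
      (isPiSystem_preimage_Iic X) hDm stronglyMeasurable_const hD (integrable_const _) ?_ (by simp)⟩
    rintro _ ⟨_, ⟨x, rfl⟩, rfl⟩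
    rw [h x, setIntegral_const, smul_eq_mul, mul_comm]

lemma apply_mul_add_one_sub_mul {t : ℝ} (ht : t = 0 ∨ t = 1) (g : ℝ → ℝ) (a b : ℝ) :
    g (t * a + (1 - t) * b) = t * g a + (1 - t) * g b := by
  rcases ht with rfl | rfl <;> simp

theorem homogeneous_restricted_CATE_characterization_general
    {Ω : Type*} [MeasurableSpace Ω] [StandardBorelSpace Ω]
    (μ : Measure Ω) [IsProbabilityMeasure μ] {k : ℕ}
    (X : Ω → (Fin k → ℝ)) (hX : Measurable X)
    (T : Ω → ℝ) (hT : Measurable T) (hT01 : ∀ ω, T ω = 0 ∨ T ω = 1)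
    (Y0 Y1 Y : Ω → ℝ) (hY0 : Measurable Y0) (hY1 : Measurable Y1)
    (hY : ∀ ω, Y ω = T ω * Y1 ω + (1 - T ω) * Y0 ω)
    (hunconf : CondIndepFun (MeasurableSpace.comap X inferInstance) hX.comap_le
      (fun ω => (Y0 ω, Y1 ω)) T μ)
    (ε : ℝ) (hε : 0 < ε)
    (p : (Fin k → ℝ) → ℝ) (hp : Measurable p)
    (hpX : (fun ω => p (X ω)) =ᵐ[μ] μ[T | MeasurableSpace.comap X inferInstance])
    (hoverlap : ∀ᵐ ω ∂μ, ε ≤ p (X ω) ∧ p (X ω) ≤ 1 - ε)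
    (hpos0 : ∀ᵐ ω ∂μ, 0 ≤ Y0 ω) (hpos1 : ∀ᵐ ω ∂μ, 0 ≤ Y1 ω)
    (τ : ℝ) (Δ : ℝ)
    (hΔ : Δ = ∫ ω, (T ω / p (X ω) - (1 - T ω) / (1 - p (X ω)))
            * (Y ω * (if Y ω ≤ τ then (1 : ℝ) else 0)) ∂μ) :
    (∃ c : ℝ,
        (fun ω =>
            (μ[(fun ω' => Y1 ω' * (if Y1 ω' ≤ τ then (1 : ℝ) else 0)) |
                MeasurableSpace.comap X inferInstance]) ω
          - (μ[(fun ω' => Y0 ω' * (if Y0 ω' ≤ τ then (1 : ℝ) else 0)) |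
                MeasurableSpace.comap X inferInstance]) ω)
          =ᵐ[μ] (fun _ => c))
      ↔
    (∀ x : Fin k → ℝ,
        (∫ ω, (T ω / p (X ω) - (1 - T ω) / (1 - p (X ω)))
            * (Y ω * (if Y ω ≤ τ then (1 : ℝ) else 0))
            * (if ∀ j, X ω j ≤ x j then (1 : ℝ) else 0) ∂μ)
          = Δ * (μ {ω | ∀ j, X ω j ≤ x j}).toReal)   := by
  have hYτ : ∀ ω, Y ω * (if Y ω ≤ τ then 1 else 0) = T ω * (Y1 ω * if Y1 ω ≤ τ then 1 else 0)
      + (1 - T ω) * (Y0 ω * if Y0 ω ≤ τ then 1 else 0) := fun ω => by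
    rw [hY ω]; exact apply_mul_add_one_sub_mul (hT01 ω) (fun y => y * if y ≤ τ then 1 else 0) _ _
  have hset := fun s => setIntegral_ipw_eq hX.comap_le hT hT01
    (hY0.mul_ite_le τ) (hY1.mul_ite_le τ) (integrable_mul_ite_le hY0 hpos0 τ)
    (integrable_mul_ite_le hY1 hpos1 τ) hYτ
    (hunconf.comp ((measurable_fst.mul_ite_le τ).prodMk (measurable_snd.mul_ite_le τ))
      measurable_id) (q := fun ω => p (X ω)) (hp.comp (comap_measurable X)).stronglyMeasurable
    hpX hε hoverlap (s := s)
  have hΔD := hset univ MeasurableSet.univ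
  rw [setIntegral_univ, setIntegral_univ, ← hΔ] at hΔD
  refine (exists_ae_eq_const_iff_forall_setIntegral_preimage_Iic hX
    (stronglyMeasurable_condExp.sub stronglyMeasurable_condExp)
    (integrable_condExp.sub integrable_condExp)).trans (forall_congr' fun x => ?_)
  simp only [Pi.sub_apply]
  rw [← hΔD, ← hset _ ⟨_, measurableSet_Iic, rfl⟩, ← integral_indicator (hX measurableSet_Iic),
    measureReal_def]
  congr! 2
  ext ω
  by_cases h : ∀ j, X ω j ≤ x j <;> simp [indicator, Pi.le_def, h]

/-- **Characterization of the null of homogeneous restricted conditional average treatment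
effect, no censoring** (the identification underlying the paper's Theorem 6): under
unconfoundedness, overlap and nonnegative potential outcomes, for fixed `τ̄` and
`Δ := E[(T/p(X) − (1−T)/(1−p(X))) · Y · 1{Y ≤ τ̄}]`, there exists a constant `c` with
`E[Y(1)·1{Y(1) ≤ τ̄} | σ(X)] − E[Y(0)·1{Y(0) ≤ τ̄} | σ(X)] = c` a.s. iff
`E[(T/p(X) − (1−T)/(1−p(X))) · Y · 1{Y ≤ τ̄} · 1{X ≤ x}] = Δ · ℙ(X ≤ x)` for every `x`. -/
theorem homogeneous_restricted_CATE_characterization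
    {Ω : Type*} [MeasurableSpace Ω] [StandardBorelSpace Ω] [Nonempty Ω]
    (μ : Measure Ω) [IsProbabilityMeasure μ] {k : ℕ}
    (X : Ω → (Fin k → ℝ)) (hX : Measurable X)
    (T : Ω → ℝ) (hT : Measurable T) (hT01 : ∀ ω, T ω = 0 ∨ T ω = 1)
    (Y0 Y1 Y : Ω → ℝ) (hY0 : Measurable Y0) (hY1 : Measurable Y1)
    (hY : ∀ ω, Y ω = T ω * Y1 ω + (1 - T ω) * Y0 ω)
    (hunconf : CondIndepFun (MeasurableSpace.comap X inferInstance) hX.comap_le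
      (fun ω => (Y0 ω, Y1 ω)) T μ)
    (ε : ℝ) (hε : 0 < ε) (hε2 : ε ≤ 1 / 2)
    (p : (Fin k → ℝ) → ℝ) (hp : Measurable p)
    (hpX : (fun ω => p (X ω)) =ᵐ[μ] μ[T | MeasurableSpace.comap X inferInstance])
    (hoverlap : ∀ᵐ ω ∂μ, ε ≤ p (X ω) ∧ p (X ω) ≤ 1 - ε)
    (hpos0 : ∀ᵐ ω ∂μ, 0 ≤ Y0 ω) (hpos1 : ∀ᵐ ω ∂μ, 0 ≤ Y1 ω)
    (τ : ℝ) (Δ : ℝ)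
    (hΔ : Δ = ∫ ω, (T ω / p (X ω) - (1 - T ω) / (1 - p (X ω)))
            * (Y ω * (if Y ω ≤ τ then (1 : ℝ) else 0)) ∂μ) :
    (∃ c : ℝ,
        (fun ω =>
            (μ[(fun ω' => Y1 ω' * (if Y1 ω' ≤ τ then (1 : ℝ) else 0)) |
                MeasurableSpace.comap X inferInstance]) ω
          - (μ[(fun ω' => Y0 ω' * (if Y0 ω' ≤ τ then (1 : ℝ) else 0)) |
                MeasurableSpace.comap X inferInstance]) ω)
          =ᵐ[μ] (fun _ => c))
      ↔
    (∀ x : Fin k → ℝ,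
        (∫ ω, (T ω / p (X ω) - (1 - T ω) / (1 - p (X ω)))
            * (Y ω * (if Y ω ≤ τ then (1 : ℝ) else 0))
            * (if ∀ j, X ω j ≤ x j then (1 : ℝ) else 0) ∂μ)
          = Δ * (μ {ω | ∀ j, X ω j ≤ x j}).toReal) :=
  homogeneous_restricted_CATE_characterization_general μ X hX T hT hT01 Y0 Y1 Y hY0 hY1 hY hunconf ε
    hε p hp hpX hoverlap hpos0 hpos1 τ Δ hΔ
end

section
/- Local treatment effect identification without censoring (the identification underlying the paper's Theorem 7 and Section 4.3): under the instrumental-variable assumptions, for every bounded measurable g : ℝ × ℝ^k → ℝ one has E[g(Y, X) · T · Z / q(X)] − E[g(Y, X) · T · (1 − Z) / (1 − q(X))] = E[g(Y(1), X) · 1{T(1) > T(0)}] and E[g(Y, X) · (1 − T) · (1 − Z) / (1 − q(X))] − E[g(Y, X) · (1 − T) · Z / q(X)] = E[g(Y(0), X) · 1{T(1) > T(0)}]. -/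
/-!
Write `V = (Y(0), Y(1), T(0), T(1))`. Because `Z` is conditionally independent of `V` given `X`
and `E[Z | X] = q(X)`, reweighting `ℙ` by the density `Z / q(X)` does not change the joint law
of `(V, X)`: on a rectangle `{V ∈ s, X ∈ t}` this is the factorisation
`E[1{V ∈ s} Z | X] = ℙ(V ∈ s | X) q(X)`, and rectangles form a π-system generating the product
σ-algebra. The same holds for `(1 - Z) / (1 - q(X))`. On `{Z = 1}` the observed treatment is
`T(1)` and `g(Y, X) T = g(Y(1), X) T`, so for instance `E[g(Y, X) T Z / q(X)] = E[g(Y(1), X) T(1)]`;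
the four observed moments become moments of potential variables, and under monotonicity
`T(1) - T(0)` is the complier indicator.
-/

open MeasureTheory ProbabilityTheory

lemma norm_inv_le_inv_of_le {ε x : ℝ} (hε : 0 < ε) (hx : ε ≤ x) : ‖x⁻¹‖ ≤ ε⁻¹ := by
  rw [Real.norm_of_nonneg (inv_nonneg.mpr (hε.trans_le hx).le)]
  exact inv_anti₀ hε hx

lemma one_sub_eq_zero_or_one_s9 {a : ℝ} (h : a = 0 ∨ a = 1) : 1 - a = 0 ∨ 1 - a = 1 := by
  rcases h with rfl | rfl <;> norm_num

lemma ite_lt_eq_sub_of_le {a b : ℝ} (ha : a = 0 ∨ a = 1) (hb : b = 0 ∨ b = 1) (hab : a ≤ b) :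
    (if a < b then (1 : ℝ) else 0) = b - a := by
  rcases ha with rfl | rfl <;> rcases hb with rfl | rfl <;> split_ifs <;> linarith

lemma observed_mul_eq_potential_mul {z t₀ t₁ t y₀ y₁ y : ℝ} (G : ℝ → ℝ)
    (hz : z = 0 ∨ z = 1) (ht₀ : t₀ = 0 ∨ t₀ = 1) (ht₁ : t₁ = 0 ∨ t₁ = 1)
    (ht : t = z * t₁ + (1 - z) * t₀) (hy : y = t * y₁ + (1 - t) * y₀) :
    G y * t * z = G y₁ * t₁ * z ∧ G y * t * (1 - z) = G y₁ * t₀ * (1 - z) ∧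
      G y * (1 - t) * (1 - z) = G y₀ * (1 - t₀) * (1 - z) ∧
      G y * (1 - t) * z = G y₀ * (1 - t₁) * z := by
  subst ht hy
  rcases hz with rfl | rfl <;> rcases ht₀ with rfl | rfl <;> rcases ht₁ with rfl | rfl <;> norm_num

section

variable {Ω : Type*} {mΩ : MeasurableSpace Ω} {μ : Measure Ω} {W r : Ω → ℝ}

lemma indicator_one_eq_self_of_zero_or_one (hW01 : ∀ ω, W ω = 0 ∨ W ω = 1) :
    (W ⁻¹' {1}).indicator (fun _ => (1 : ℝ)) = W := by
  ext ω
  rcases hW01 ω with h | h <;> simp [h]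

lemma ae_div_nonneg_and_le_inv {ε : ℝ} (hW01 : ∀ ω, W ω = 0 ∨ W ω = 1) (hε : 0 < ε)
    (hrε : ∀ᵐ ω ∂μ, ε ≤ r ω) : ∀ᵐ ω ∂μ, 0 ≤ W ω / r ω ∧ W ω / r ω ≤ ε⁻¹ := by
  filter_upwards [hrε] with ω hεω
  rcases hW01 ω with h | h
  · simp [h, hε.le]
  · simpa [h, (hε.trans_le hεω).le] using inv_anti₀ hε hεω

lemma one_sub_ae_eq_condExp_one_sub {m : MeasurableSpace Ω} (hm : m ≤ mΩ) [IsFiniteMeasure μ]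
    {Z : Ω → ℝ} (hZ : Integrable Z μ) (hr : r =ᵐ[μ] μ[Z | m]) :
    (fun ω => 1 - r ω) =ᵐ[μ] μ[fun ω => 1 - Z ω | m] := by
  have hsub := condExp_sub (integrable_const (1 : ℝ)) hZ m
  rw [condExp_const hm] at hsub
  filter_upwards [hsub, hr] with ω h1 h2
  rw [h2]
  exact h1.symm

lemma integral_mul_sub_integral_mul_eq_integral_mul_ite {G t₀ t₁ : Ω → ℝ} (hG : Integrable G μ)
    (ht₀ : Measurable t₀) (ht₁ : Measurable t₁) (ht₀01 : ∀ ω, t₀ ω = 0 ∨ t₀ ω = 1)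
    (ht₁01 : ∀ ω, t₁ ω = 0 ∨ t₁ ω = 1) (hle : ∀ᵐ ω ∂μ, t₀ ω ≤ t₁ ω) :
    (∫ ω, G ω * t₁ ω ∂μ) - ∫ ω, G ω * t₀ ω ∂μ
      = ∫ ω, G ω * (if t₀ ω < t₁ ω then (1 : ℝ) else 0) ∂μ := by
  have hint {t : Ω → ℝ} (ht : Measurable t) (ht01 : ∀ ω, t ω = 0 ∨ t ω = 1) :
      Integrable (fun ω => G ω * t ω) μ :=
    hG.mul_bdd (c := 1) ht.aestronglyMeasurable
      (ae_of_all _ fun ω => by rcases ht01 ω with h | h <;> simp [h])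
  rw [← integral_sub (hint ht₁ ht₁01) (hint ht₀ ht₀01)]
  refine integral_congr_ae (hle.mono fun ω h => ?_)
  dsimp only
  rw [ite_lt_eq_sub_of_le (ht₀01 ω) (ht₁01 ω) h]
  ring

end

section Reweighting

variable {Ω α β : Type*} {m mΩ : MeasurableSpace Ω} [StandardBorelSpace Ω]
  [MeasurableSpace α] [MeasurableSpace β] {hm : m ≤ mΩ} {μ : Measure Ω} [IsFiniteMeasure μ]
  {V : Ω → α} {X : Ω → β} {W r : Ω → ℝ} {ε : ℝ}

lemma condExp_indicator_mul_eq_mul_condExp (hV : Measurable V) (hW : Measurable W)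
    (hW01 : ∀ ω, W ω = 0 ∨ W ω = 1) (hVW : CondIndepFun m hm V W μ) {s : Set α}
    (hs : MeasurableSet s) :
    μ[(V ⁻¹' s).indicator (fun _ => (1 : ℝ)) * W | m] =ᵐ[μ] μ⟦V ⁻¹' s | m⟧ * μ[W | m] := by
  have hW1 := indicator_one_eq_self_of_zero_or_one hW01
  have := (condIndepFun_iff_condExp_inter_preimage_eq_mul hV hW).mp hVW s {1} hs
    (measurableSet_singleton 1)
  have hprod : (V ⁻¹' s ∩ W ⁻¹' {1}).indicator (fun _ => (1 : ℝ))
      = (V ⁻¹' s).indicator (fun _ => 1) * W := by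
    conv_rhs => rw [← hW1]
    exact Set.inter_indicator_one
  rwa [hprod, hW1] at this

lemma setIntegral_inter_preimage_div_eq_measureReal (hV : Measurable V) (hW : Measurable W)
    (hW01 : ∀ ω, W ω = 0 ∨ W ω = 1) (hVW : CondIndepFun m hm V W μ) (hε : 0 < ε)
    (hr : Measurable[m] r) (hrε : ∀ᵐ ω ∂μ, ε ≤ r ω) (hrW : r =ᵐ[μ] μ[W | m])
    {s : Set α} (hs : MeasurableSet s) {A : Set Ω} (hA : MeasurableSet[m] A) :
    ∫ ω in A ∩ V ⁻¹' s, W ω / r ω ∂μ = μ.real (A ∩ V ⁻¹' s) := by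
  set I := (V ⁻¹' s).indicator (fun _ => (1 : ℝ))
  have hI : Integrable I μ := (integrable_const 1).indicator (hV hs)
  have hIW : Integrable (I * W) μ := by
    refine hI.mul_bdd hW.aestronglyMeasurable (c := 1) (ae_of_all _ fun ω => ?_)
    rcases hW01 ω with h | h <;> simp [h]
  have hrinv : ∀ᵐ ω ∂μ, ‖(r ω)⁻¹‖ ≤ ε⁻¹ := hrε.mono fun ω h => norm_inv_le_inv_of_le hε h
  have hsplit : (V ⁻¹' s).indicator (fun ω => W ω / r ω) = r⁻¹ * (I * W) := by
    ext ω
    by_cases h : ω ∈ V ⁻¹' s <;> simp [I, h, div_eq_inv_mul]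
  have hcond : μ[(V ⁻¹' s).indicator (fun ω => W ω / r ω) | m] =ᵐ[μ] μ⟦V ⁻¹' s | m⟧ := by
    rw [hsplit]
    filter_upwards [condExp_stronglyMeasurable_mul_of_bound hm hr.inv.stronglyMeasurable hIW
      ε⁻¹ hrinv, condExp_indicator_mul_eq_mul_condExp hV hW hW01 hVW hs, hrW, hrε]
      with ω hpull hprod hrω hεω
    rw [hpull, Pi.mul_apply, Pi.inv_apply, hprod, Pi.mul_apply, ← hrω]
    field_simp [(hε.trans_le hεω).ne']
  have hint : Integrable ((V ⁻¹' s).indicator (fun ω => W ω / r ω)) μ := by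
    rw [hsplit]
    exact hIW.bdd_mul (hr.inv.mono hm le_rfl).aestronglyMeasurable hrinv
  rw [← setIntegral_indicator (hV hs), ← setIntegral_condExp hm hint hA,
    setIntegral_congr_ae (hm A hA) (hcond.mono fun ω h _ => h), setIntegral_condExp hm hI hA,
    setIntegral_indicator (hV hs)]
  simp

lemma map_withDensity_div_eq_map (hV : Measurable V) (hW : Measurable W)
    (hW01 : ∀ ω, W ω = 0 ∨ W ω = 1) (hVW : CondIndepFun m hm V W μ) (hε : 0 < ε)
    (hr : Measurable[m] r) (hrε : ∀ᵐ ω ∂μ, ε ≤ r ω) (hrW : r =ᵐ[μ] μ[W | m])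
    (hX : Measurable[m] X) :
    (μ.withDensity fun ω => ENNReal.ofReal (W ω / r ω)).map (fun ω => (V ω, X ω))
      = μ.map (fun ω => (V ω, X ω)) := by
  have hVX : Measurable fun ω => (V ω, X ω) := hV.prodMk (hX.mono hm le_rfl)
  have hdiv := ae_div_nonneg_and_le_inv hW01 hε hrε
  have hint : Integrable (fun ω => W ω / r ω) μ :=
    .of_bound (hW.div (hr.mono hm le_rfl)).aestronglyMeasurable ε⁻¹
      (hdiv.mono fun ω h => by rw [Real.norm_of_nonneg h.1]; exact h.2)
  have hbox : ∀ s t, MeasurableSet s → MeasurableSet t →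
      μ.map (fun ω => (V ω, X ω)) (s ×ˢ t)
        = (μ.withDensity fun ω => ENNReal.ofReal (W ω / r ω)).map (fun ω => (V ω, X ω))
          (s ×ˢ t) := by
    intro s t hs ht
    have hA : MeasurableSet[m] (X ⁻¹' t) := hX ht
    rw [Measure.map_apply hVX (hs.prod ht), Measure.map_apply hVX (hs.prod ht),
      Set.mk_preimage_prod, Set.inter_comm, withDensity_apply _ ((hm _ hA).inter (hV hs)),
      ← ofReal_integral_eq_lintegral_ofReal hint.integrableOn (ae_restrict_of_ae
        (hdiv.mono fun _ h => h.1)),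
      setIntegral_inter_preimage_div_eq_measureReal hV hW hW01 hVW hε hr hrε hrW hs hA,
      ofReal_measureReal]
  refine (ext_of_generate_finite _ generateFrom_prod.symm isPiSystem_prod ?_ ?_).symm
  · rintro _ ⟨s, hs, t, ht, rfl⟩
    exact hbox s t hs ht
  · simpa using hbox Set.univ Set.univ .univ .univ

lemma integral_mul_div_eq_integral (hV : Measurable V) (hW : Measurable W)
    (hW01 : ∀ ω, W ω = 0 ∨ W ω = 1) (hVW : CondIndepFun m hm V W μ) (hε : 0 < ε)
    (hr : Measurable[m] r) (hrε : ∀ᵐ ω ∂μ, ε ≤ r ω) (hrW : r =ᵐ[μ] μ[W | m])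
    (hX : Measurable[m] X) {f : α × β → ℝ} (hf : Measurable f) :
    ∫ ω, f (V ω, X ω) * W ω / r ω ∂μ = ∫ ω, f (V ω, X ω) ∂μ := by
  have hVX : Measurable fun ω => (V ω, X ω) := hV.prodMk (hX.mono hm le_rfl)
  have hd : Measurable fun ω => ENNReal.ofReal (W ω / r ω) :=
    (hW.div (hr.mono hm le_rfl)).ennreal_ofReal
  rw [← integral_map hVX.aemeasurable hf.aestronglyMeasurable,
    ← map_withDensity_div_eq_map hV hW hW01 hVW hε hr hrε hrW hX,
    integral_map hVX.aemeasurable hf.aestronglyMeasurable,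
    integral_withDensity_eq_integral_toReal_smul hd (ae_of_all _ fun _ => ENNReal.ofReal_lt_top)]
  refine integral_congr_ae ?_
  filter_upwards [ae_div_nonneg_and_le_inv hW01 hε hrε] with ω h
  rw [ENNReal.toReal_ofReal h.1, smul_eq_mul]
  ring

lemma integral_mul_one_sub_div_eq_integral (hV : Measurable V) (hW : Measurable W)
    (hW01 : ∀ ω, W ω = 0 ∨ W ω = 1) (hVW : CondIndepFun m hm V W μ) (hε : 0 < ε)
    (hr : Measurable[m] r) (hrε : ∀ᵐ ω ∂μ, r ω ≤ 1 - ε) (hrW : r =ᵐ[μ] μ[W | m])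
    (hX : Measurable[m] X) {f : α × β → ℝ} (hf : Measurable f) :
    ∫ ω, f (V ω, X ω) * (1 - W ω) / (1 - r ω) ∂μ = ∫ ω, f (V ω, X ω) ∂μ :=
  integral_mul_div_eq_integral hV (hW.const_sub 1) (fun ω => one_sub_eq_zero_or_one_s9 (hW01 ω))
    (hVW.comp measurable_id (measurable_id.const_sub 1)) hε (r := fun ω => 1 - r ω)
    (hr.const_sub 1) (hrε.mono fun _ h => by linarith)
    (one_sub_ae_eq_condExp_one_sub hm (.of_bound hW.aestronglyMeasurable 1
      (ae_of_all _ fun ω => by rcases hW01 ω with h | h <;> simp [h])) hrW) hX hf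

end Reweighting

theorem late_identification_no_censoring_general
    {Ω : Type*} [MeasurableSpace Ω] [StandardBorelSpace Ω]
    (μ : Measure Ω) [IsProbabilityMeasure μ] {k : ℕ}
    (X : Ω → (Fin k → ℝ)) (hX : Measurable X)
    (Z : Ω → ℝ) (hZ : Measurable Z) (hZ01 : ∀ ω, Z ω = 0 ∨ Z ω = 1)
    (T0 T1 : Ω → ℝ) (hT0 : Measurable T0) (hT1 : Measurable T1)
    (hT001 : ∀ ω, T0 ω = 0 ∨ T0 ω = 1) (hT101 : ∀ ω, T1 ω = 0 ∨ T1 ω = 1)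
    (Y0 Y1 : Ω → ℝ) (hY0 : Measurable Y0) (hY1 : Measurable Y1)
    (T : Ω → ℝ) (hT : ∀ ω, T ω = Z ω * T1 ω + (1 - Z ω) * T0 ω)
    (Y : Ω → ℝ) (hY : ∀ ω, Y ω = T ω * Y1 ω + (1 - T ω) * Y0 ω)
    (hiv : CondIndepFun (MeasurableSpace.comap X inferInstance) hX.comap_le
      (fun ω => (Y0 ω, Y1 ω, T0 ω, T1 ω)) Z μ)
    (ε : ℝ) (hε : 0 < ε)
    (q : (Fin k → ℝ) → ℝ) (hq : Measurable q)
    (hqX : (fun ω => q (X ω)) =ᵐ[μ] μ[Z | MeasurableSpace.comap X inferInstance])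
    (hoverlap : ∀ᵐ ω ∂μ, ε ≤ q (X ω) ∧ q (X ω) ≤ 1 - ε)
    (hmono : ∀ᵐ ω ∂μ, T0 ω ≤ T1 ω)
    (g : ℝ × (Fin k → ℝ) → ℝ) (hg : Measurable g)
    (M : ℝ) (hM : ∀ z, |g z| ≤ M) :
    ((∫ ω, g (Y ω, X ω) * T ω * Z ω / q (X ω) ∂μ)
        - (∫ ω, g (Y ω, X ω) * T ω * (1 - Z ω) / (1 - q (X ω)) ∂μ)
      = ∫ ω, g (Y1 ω, X ω) * (if T0 ω < T1 ω then (1 : ℝ) else 0) ∂μ) ∧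
    ((∫ ω, g (Y ω, X ω) * (1 - T ω) * (1 - Z ω) / (1 - q (X ω)) ∂μ)
        - (∫ ω, g (Y ω, X ω) * (1 - T ω) * Z ω / q (X ω) ∂μ)
      = ∫ ω, g (Y0 ω, X ω) * (if T0 ω < T1 ω then (1 : ℝ) else 0) ∂μ) := by
  have hXm : Measurable[MeasurableSpace.comap X inferInstance] X := comap_measurable X
  have hqm : Measurable[MeasurableSpace.comap X inferInstance] fun ω => q (X ω) := hq.comp hXm
  have hV : Measurable fun ω => (Y0 ω, Y1 ω, T0 ω, T1 ω) := by fun_prop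
  have ipw₁ {f} (hf : Measurable f) := integral_mul_div_eq_integral hV hZ hZ01 hiv hε hqm
    (hoverlap.mono fun _ h => h.1) hqX hXm hf
  have ipw₀ {f} (hf : Measurable f) := integral_mul_one_sub_div_eq_integral hV hZ hZ01 hiv hε
    hqm (hoverlap.mono fun _ h => h.2) hqX hXm hf
  have arms ω := observed_mul_eq_potential_mul (fun y => g (y, X ω))
    (hZ01 ω) (hT001 ω) (hT101 ω) (hT ω) (hY ω)
  have hgint {Y' : Ω → ℝ} (hY' : Measurable Y') : Integrable (fun ω => g (Y' ω, X ω)) μ :=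
    .of_bound (hg.comp (hY'.prodMk hX)).aestronglyMeasurable M (ae_of_all _ fun _ => hM _)
  constructor
  · simp only [fun ω => (arms ω).1, fun ω => (arms ω).2.1]
    rw [ipw₁ (f := fun p => g (p.1.2.1, p.2) * p.1.2.2.2) (by fun_prop),
      ipw₀ (f := fun p => g (p.1.2.1, p.2) * p.1.2.2.1) (by fun_prop)]
    exact integral_mul_sub_integral_mul_eq_integral_mul_ite (hgint hY1) hT0 hT1 hT001 hT101 hmono
  · simp only [fun ω => (arms ω).2.2.1, fun ω => (arms ω).2.2.2]
    rw [ipw₀ (f := fun p => g (p.1.1, p.2) * (1 - p.1.2.2.1)) (by fun_prop),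
      ipw₁ (f := fun p => g (p.1.1, p.2) * (1 - p.1.2.2.2)) (by fun_prop)]
    simpa only [sub_lt_sub_iff_left] using integral_mul_sub_integral_mul_eq_integral_mul_ite
      (hgint hY0) (hT1.const_sub 1) (hT0.const_sub 1) (fun ω => one_sub_eq_zero_or_one_s9 (hT101 ω))
      (fun ω => one_sub_eq_zero_or_one_s9 (hT001 ω)) (hmono.mono fun _ h => by linarith)

/-- **Local treatment effect identification, no censoring** (the identification underlying
the paper's Theorem 7 and Section 4.3): under the instrumental-variable assumptions, for
every bounded measurable `g`,
`E[g(Y,X)·T·Z/q(X)] − E[g(Y,X)·T·(1−Z)/(1−q(X))] = E[g(Y(1),X)·1{T(1) > T(0)}]` and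
`E[g(Y,X)·(1−T)·(1−Z)/(1−q(X))] − E[g(Y,X)·(1−T)·Z/q(X)] = E[g(Y(0),X)·1{T(1) > T(0)}]`. -/
theorem late_identification_no_censoring
    {Ω : Type*} [MeasurableSpace Ω] [StandardBorelSpace Ω] [Nonempty Ω]
    (μ : Measure Ω) [IsProbabilityMeasure μ] {k : ℕ}
    (X : Ω → (Fin k → ℝ)) (hX : Measurable X)
    (Z : Ω → ℝ) (hZ : Measurable Z) (hZ01 : ∀ ω, Z ω = 0 ∨ Z ω = 1)
    (T0 T1 : Ω → ℝ) (hT0 : Measurable T0) (hT1 : Measurable T1)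
    (hT001 : ∀ ω, T0 ω = 0 ∨ T0 ω = 1) (hT101 : ∀ ω, T1 ω = 0 ∨ T1 ω = 1)
    (Y0 Y1 : Ω → ℝ) (hY0 : Measurable Y0) (hY1 : Measurable Y1)
    (T : Ω → ℝ) (hT : ∀ ω, T ω = Z ω * T1 ω + (1 - Z ω) * T0 ω)
    (Y : Ω → ℝ) (hY : ∀ ω, Y ω = T ω * Y1 ω + (1 - T ω) * Y0 ω)
    (hiv : CondIndepFun (MeasurableSpace.comap X inferInstance) hX.comap_le
      (fun ω => (Y0 ω, Y1 ω, T0 ω, T1 ω)) Z μ)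
    (ε : ℝ) (hε : 0 < ε) (hε2 : ε ≤ 1 / 2)
    (q : (Fin k → ℝ) → ℝ) (hq : Measurable q)
    (hqX : (fun ω => q (X ω)) =ᵐ[μ] μ[Z | MeasurableSpace.comap X inferInstance])
    (hoverlap : ∀ᵐ ω ∂μ, ε ≤ q (X ω) ∧ q (X ω) ≤ 1 - ε)
    (hmono : ∀ᵐ ω ∂μ, T0 ω ≤ T1 ω)
    (g : ℝ × (Fin k → ℝ) → ℝ) (hg : Measurable g)
    (M : ℝ) (hM : ∀ z, |g z| ≤ M) :
    ((∫ ω, g (Y ω, X ω) * T ω * Z ω / q (X ω) ∂μ)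
        - (∫ ω, g (Y ω, X ω) * T ω * (1 - Z ω) / (1 - q (X ω)) ∂μ)
      = ∫ ω, g (Y1 ω, X ω) * (if T0 ω < T1 ω then (1 : ℝ) else 0) ∂μ) ∧
    ((∫ ω, g (Y ω, X ω) * (1 - T ω) * (1 - Z ω) / (1 - q (X ω)) ∂μ)
        - (∫ ω, g (Y ω, X ω) * (1 - T ω) * Z ω / q (X ω) ∂μ)
      = ∫ ω, g (Y0 ω, X ω) * (if T0 ω < T1 ω then (1 : ℝ) else 0) ∂μ) :=
  late_identification_no_censoring_general μ X hX Z hZ hZ01 T0 T1 hT0 hT1 hT001 hT101 Y0 Y1 hY0 hY1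
    T hT Y hY hiv ε hε q hq hqX hoverlap hmono g hg M hM
end

section
/- Exponential formula for the cumulative hazard of a continuous distribution (the atomless case of the product-limit representation (3) in the paper): let μ be a Borel probability measure on ℝ whose cumulative distribution function F(y) = μ((−∞, y]) is continuous. For every y ∈ ℝ with F(y) < 1, the cumulative hazard Λ(y) = ∫_{(−∞, y]} (1 − F(s))⁻¹ dμ(s) is finite and satisfies F(y) = 1 − exp(−Λ(y)). -/
open MeasureTheory

open Set Filter Real Topology in
/-- **Exponential formula for the cumulative hazard of a continuous distribution** (the
atomless case of the product-limit representation (3) in the paper): if the CDF `F` of a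
Borel probability measure `μ` on `ℝ` is continuous, then for every `y` with `F y < 1` the
cumulative hazard `Λ(y) = ∫_{(−∞,y]} (1 − F(s))⁻¹ dμ(s)` is finite and
`F y = 1 − exp(−Λ(y))`. -/
theorem cumulative_hazard_exponential_formula
    (μ : Measure ℝ) [IsProbabilityMeasure μ]
    (F : ℝ → ℝ) (hF : ∀ y, F y = (μ (Set.Iic y)).toReal)
    (hFcont : Continuous F)
    (y : ℝ) (hy : F y < 1) :
    IntegrableOn (fun s => (1 - F s)⁻¹) (Set.Iic y) μ ∧
    F y = 1 - Real.exp (- ∫ s in Set.Iic y, (1 - F s)⁻¹ ∂μ) := by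
  have hFmono : Monotone F := fun a b hab => by
    rw [hF a, hF b]
    exact ENNReal.toReal_mono (measure_ne_top μ _) (measure_mono (Iic_subset_Iic.2 hab))
  have hF0 : ∀ s, 0 ≤ F s := fun s => by rw [hF s]; exact ENNReal.toReal_nonneg
  set c := F y with hc
  have hc0 : 0 ≤ c := hF0 y
  have h1c : 0 < 1 - c := by linarith
  -- integrability
  have hmeas : Measurable fun s => (1 - F s)⁻¹ := (continuous_const.sub hFcont).measurable.inv
  have hbound : ∀ s ∈ Iic y, ‖(1 - F s)⁻¹‖ ≤ (1 - c)⁻¹ := by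
    intro s hs
    have h1 : 1 - c ≤ 1 - F s := by have := hFmono (hs : s ≤ y); simp only [hc]; linarith
    rw [Real.norm_eq_abs, abs_of_nonneg (inv_nonneg.2 (by linarith))]
    exact inv_anti₀ h1c h1
  have hint : IntegrableOn (fun s => (1 - F s)⁻¹) (Iic y) μ := by
    refine Measure.integrableOn_of_bounded (M := (1 - c)⁻¹) (measure_ne_top μ _)
      hmeas.aestronglyMeasurable ?_
    exact (ae_restrict_iff' measurableSet_Iic).2 (Filter.Eventually.of_forall hbound)
  refine ⟨hint, ?_⟩
  -- the key measure computation: μ {F ≤ t} = ofReal t for t < 1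
  have hkey : ∀ t : ℝ, t < 1 → μ (F ⁻¹' Iic t) = ENNReal.ofReal t := by
    intro t ht
    rcases lt_or_ge t 0 with hneg | hpos
    · have : F ⁻¹' Iic t = ∅ := by
        ext s; simp only [mem_preimage, mem_Iic, mem_empty_iff_false, iff_false, not_le]
        exact lt_of_lt_of_le hneg (hF0 s)
      rw [this, measure_empty, ENNReal.ofReal_of_nonpos hneg.le]
    · set A := F ⁻¹' Iic t with hA
      have hAclosed : IsClosed A := isClosed_Iic.preimage hFcont
      have htop : Tendsto F atTop (𝓝 1) := by
        have h := (ENNReal.tendsto_toReal (measure_ne_top μ univ)).comp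
          (tendsto_measure_Iic_atTop μ)
        simp only [measure_univ, ENNReal.toReal_one] at h
        exact h.congr fun x => (hF x).symm
      obtain ⟨M, hM⟩ := Filter.eventually_atTop.1 (htop.eventually (eventually_gt_nhds ht))
      have hAbdd : BddAbove A := by
        refine ⟨M, fun s hs => ?_⟩
        by_contra h
        exact absurd (hs : F s ≤ t) (not_le.2 (hM s (le_of_not_ge h)))
      rcases A.eq_empty_or_nonempty with hAe | hAne
      · -- A empty forces t = 0
        have ht0 : t ≤ 0 := by
          by_contra h
          push_neg at h
          have hlb : ∀ x : ℝ, ENNReal.ofReal t ≤ μ (Iic x) := by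
            intro x
            refine ENNReal.ofReal_le_of_le_toReal ?_
            rw [← hF x]
            by_contra hh
            push_neg at hh
            exact (Set.eq_empty_iff_forall_notMem.1 hAe x) (le_of_lt hh)
          have hseq : Tendsto (fun n : ℕ => μ (Iic (-(n : ℝ)))) atTop
              (𝓝 (μ (⋂ n : ℕ, Iic (-(n : ℝ))))) :=
            tendsto_measure_iInter_atTop (fun n => measurableSet_Iic.nullMeasurableSet)
              (fun m n hmn => Iic_subset_Iic.2 (neg_le_neg (by exact_mod_cast hmn)))
              ⟨0, measure_ne_top μ _⟩
          have hempty : (⋂ n : ℕ, Iic (-(n : ℝ))) = ∅ := by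
            ext x
            simp only [mem_iInter, mem_Iic, mem_empty_iff_false, iff_false, not_forall, not_le]
            obtain ⟨n, hn⟩ := exists_nat_gt (-x)
            exact ⟨n, by linarith⟩
          rw [hempty, measure_empty] at hseq
          have := ge_of_tendsto' hseq fun n => hlb _
          exact absurd this (by simpa using (ENNReal.ofReal_pos.2 h).ne')
        have : t = 0 := le_antisymm ht0 hpos
        rw [hAe, measure_empty, this, ENNReal.ofReal_zero]
      · set b := sSup A with hb
        have hbA : b ∈ A := hAclosed.csSup_mem hAne hAbdd
        have hFb_le : F b ≤ t := hbA
        have hFb_ge : t ≤ F b := by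
          by_contra h
          push_neg at h
          have hev : ∀ᶠ s in 𝓝 b, F s < t := hFcont.continuousAt.eventually_lt_const h
          have h2 : ∀ᶠ s in 𝓝[>] b, F s < t := hev.filter_mono nhdsWithin_le_nhds
          obtain ⟨s, hslt, hsb⟩ := (h2.and self_mem_nhdsWithin).exists
          exact absurd (le_csSup hAbdd (hslt.le : F s ≤ t)) (not_le.2 hsb)
        have hAeq : A = Iic b := by
          apply subset_antisymm (fun s hs => le_csSup hAbdd hs)
          intro s hs
          exact le_trans (hFmono hs) hFb_le
        rw [hAeq, ← le_antisymm hFb_le hFb_ge, hF b,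
          ENNReal.ofReal_toReal (measure_ne_top μ _)]
  -- μ (Iic y) = ofReal c
  have hμy : μ (Iic y) = ENNReal.ofReal c := by
    rw [hc, hF y, ENNReal.ofReal_toReal (measure_ne_top μ _)]
  -- Iic y =ᵐ[μ] F ⁻¹' Iic c
  have hsub : Iic y ⊆ F ⁻¹' Iic c := fun s hs => hFmono hs
  have haeeq : Iic y =ᵐ[μ] (F ⁻¹' Iic c) := by
    refine ae_eq_of_subset_of_measure_ge hsub ?_ measurableSet_Iic.nullMeasurableSet
      (measure_ne_top μ _)
    rw [hμy, hkey c hy]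
  -- pushforward measure
  set ν := μ.map F with hν
  have hνIic : ∀ t : ℝ, t < 1 → ν (Iic t) = ENNReal.ofReal t := by
    intro t ht
    rw [hν, Measure.map_apply hFcont.measurable measurableSet_Iic, hkey t ht]
  have : IsProbabilityMeasure ν := Measure.isProbabilityMeasure_map hFcont.measurable.aemeasurable
  -- ν restricted to Iic c equals Lebesgue on Ioc 0 c
  have hrestrict : ν.restrict (Iic c) = volume.restrict (Ioc 0 c) := by
    apply Measure.ext_of_Iic
    intro a
    rw [Measure.restrict_apply measurableSet_Iic, Measure.restrict_apply measurableSet_Iic,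
      Iic_inter_Iic]
    have hmin : min a c < 1 := lt_of_le_of_lt (min_le_right a c) hy
    rw [hνIic _ hmin]
    rw [Set.inter_comm, Ioc_inter_Iic, Real.volume_Ioc, sub_zero, min_comm]
  -- change of variables
  have hg : Measurable fun u : ℝ => (1 - u)⁻¹ := (continuous_const.sub continuous_id).measurable.inv
  have hchg : ∫ s in Iic y, (1 - F s)⁻¹ ∂μ = ∫ u in Iic c, (1 - u)⁻¹ ∂ν := by
    rw [setIntegral_congr_set haeeq]
    exact (setIntegral_map measurableSet_Iic hg.aestronglyMeasurable
      hFcont.measurable.aemeasurable).symm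
  have hval : ∫ u in Iic c, (1 - u)⁻¹ ∂ν = -Real.log (1 - c) := by
    rw [hrestrict, ← intervalIntegral.integral_of_le hc0]
    have heq := intervalIntegral.integral_comp_sub_left (a := 0) (b := c)
      (fun x : ℝ => x⁻¹) 1
    simp only [sub_zero] at heq
    rw [heq]
    rw [integral_inv (by
      intro h
      rw [Set.mem_uIcc] at h
      rcases h with ⟨h1, _⟩ | ⟨_, h2⟩ <;> linarith)]
    rw [one_div, Real.log_inv]
  rw [hchg, hval, neg_neg, Real.exp_log h1c]
  ring
end

section
/- Identification of the hazard of the outcome from observables under independent censoring: suppose Y and C are independent, and let ν¹ be the sub-distribution measure ν¹(A) = ℙ(Y ∈ A, Y ≤ C) for Borel A ⊆ ℝ. Then for every y ∈ ℝ with ℙ(min(Y, C) ≥ y) > 0, ∫_{(−∞, y]} ℙ(min(Y, C) ≥ s)⁻¹ dν¹(s) = ∫_{(−∞, y]} ℙ(Y ≥ s)⁻¹ dμ_Y(s), and both integrals are finite. (This says that the cumulative hazard (2) built from the observable pair (Q, δ) coincides with the cumulative hazard of the latent outcome Y.) -/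
open MeasureTheory ProbabilityTheory

/-! Under independence, `ℙ(min(Y,C) ≥ s) = ℙ(Y ≥ s) ℙ(C ≥ s)` and the sub-distribution `ν¹` has
density `S_C` with respect to the law of `Y`. Hence on `(−∞, y]`, where `S_C ≥ ℙ(min(Y,C) ≥ y) > 0`,
the factor `S_C` cancels in the integrand. Finiteness follows from the bound
`ℙ(Y ≥ s)⁻¹ ≤ ℙ(Y ≥ y)⁻¹` on `(−∞, y]`. -/

section Survival

variable {Ω : Type*} [MeasurableSpace Ω] {μ : Measure Ω}

theorem measurable_measure_le (X : Ω → ℝ) : Measurable fun s => μ {ω | s ≤ X ω} :=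
  Antitone.measurable fun _ _ hst => measure_mono fun _ hω => hst.trans hω

theorem ProbabilityTheory.IndepFun.measure_le_min_eq_mul {X Z : Ω → ℝ} (h : IndepFun X Z μ)
    (s : ℝ) :
    μ {ω | s ≤ min (X ω) (Z ω)} = μ {ω | s ≤ X ω} * μ {ω | s ≤ Z ω} := by
  have hinter : X ⁻¹' Set.Ici s ∩ Z ⁻¹' Set.Ici s = {ω | s ≤ min (X ω) (Z ω)} := by
    ext ω; simp
  rw [← hinter]
  exact h.measure_inter_preimage_eq_mul _ _ measurableSet_Ici measurableSet_Ici

theorem ProbabilityTheory.IndepFun.measure_le_mul_inv_measure_le_min [IsFiniteMeasure μ]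
    {X Z : Ω → ℝ} (h : IndepFun X Z μ) {s : ℝ} (hZ : μ {ω | s ≤ Z ω} ≠ 0) :
    μ {ω | s ≤ Z ω} * (μ {ω | s ≤ min (X ω) (Z ω)})⁻¹ = (μ {ω | s ≤ X ω})⁻¹ := by
  rw [h.measure_le_min_eq_mul, ENNReal.mul_inv (.inr (measure_ne_top _ _))
    (.inl (measure_ne_top _ _)), mul_left_comm, ENNReal.mul_inv_cancel hZ (measure_ne_top _ _),
    mul_one]

theorem ProbabilityTheory.IndepFun.map_restrict_le_eq_withDensity [IsFiniteMeasure μ]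
    {X Z : Ω → ℝ} (hX : Measurable X) (hZ : Measurable Z) (h : IndepFun X Z μ) :
    (μ.restrict {ω | X ω ≤ Z ω}).map X = (μ.map X).withDensity fun s => μ {ω | s ≤ Z ω} := by
  ext A hA
  set S : Set (ℝ × ℝ) := {p | p.1 ∈ A ∧ p.1 ≤ p.2}
  have hS : MeasurableSet S := (hA.preimage measurable_fst).inter measurableSet_le'
  have hsection : ∀ s, μ.map Z (Prod.mk s ⁻¹' S) = A.indicator (fun s => μ {ω | s ≤ Z ω}) s := by
    intro s
    rw [Measure.map_apply hZ (measurable_prodMk_left hS)]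
    by_cases hs : s ∈ A <;> simp [S, hs]
  calc (μ.restrict {ω | X ω ≤ Z ω}).map X A
      = μ ((fun ω => (X ω, Z ω)) ⁻¹' S) := by
        rw [Measure.map_apply hX hA, Measure.restrict_apply (hX hA)]
        rfl
    _ = ((μ.map X).prod (μ.map Z)) S := by
        rw [← (indepFun_iff_map_prod_eq_prod_map_map hX.aemeasurable hZ.aemeasurable).mp h,
          Measure.map_apply (hX.prodMk hZ) hS]
    _ = _ := by
        rw [Measure.prod_apply hS, withDensity_apply _ hA, ← lintegral_indicator hA]
        simp_rw [hsection]

theorem lintegral_Iic_inv_measure_le_ne_top [IsFiniteMeasure μ] {X : Ω → ℝ} {y : ℝ}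
    (hy : 0 < μ {ω | y ≤ X ω}) :
    ∫⁻ s in Set.Iic y, (μ {ω | s ≤ X ω})⁻¹ ∂(μ.map X) ≠ ⊤ := by
  refine ne_top_of_le_ne_top ?_ (setLIntegral_mono measurable_const fun s (hs : s ≤ y) =>
    ENNReal.inv_le_inv' (measure_mono fun ω (hω : y ≤ X ω) => hs.trans hω))
  rw [setLIntegral_const]
  exact ENNReal.mul_ne_top (ENNReal.inv_ne_top.2 hy.ne') (measure_ne_top _ _)

end Survival

/-- **Identification of the hazard of the outcome from observables under independent
censoring**: if `Y ⫫ C` and `ν¹(A) = ℙ(Y ∈ A, Y ≤ C)`, then for every `y` with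
`ℙ(min(Y,C) ≥ y) > 0`,
`∫_{(−∞,y]} ℙ(min(Y,C) ≥ s)⁻¹ dν¹(s) = ∫_{(−∞,y]} ℙ(Y ≥ s)⁻¹ dμ_Y(s)`,
and both integrals are finite. -/
theorem cumulative_hazard_identification
    {Ω : Type*} [MeasurableSpace Ω]
    (μ : Measure Ω) [IsProbabilityMeasure μ]
    (Y : Ω → ℝ) (hY : Measurable Y)
    (C : Ω → ℝ) (hC : Measurable C)
    (hindep : IndepFun Y C μ)
    (ν : Measure ℝ)
    (hν : ∀ A : Set ℝ, MeasurableSet A → ν A = μ {ω | Y ω ∈ A ∧ Y ω ≤ C ω})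
    (y : ℝ) (hy : 0 < μ {ω | y ≤ min (Y ω) (C ω)}) :
    (∫⁻ s in Set.Iic y, (μ {ω | s ≤ min (Y ω) (C ω)})⁻¹ ∂ν)
      = (∫⁻ s in Set.Iic y, (μ {ω | s ≤ Y ω})⁻¹ ∂(Measure.map Y μ)) ∧
    (∫⁻ s in Set.Iic y, (μ {ω | s ≤ min (Y ω) (C ω)})⁻¹ ∂ν) ≠ ⊤ ∧
    (∫⁻ s in Set.Iic y, (μ {ω | s ≤ Y ω})⁻¹ ∂(Measure.map Y μ)) ≠ ⊤ := by
  have hν_eq : ν = (μ.map Y).withDensity fun s => μ {ω | s ≤ C ω} := by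
    rw [← hindep.map_restrict_le_eq_withDensity hY hC]
    ext A hA
    rw [hν A hA, Measure.map_apply hY hA, Measure.restrict_apply (hY hA)]
    rfl
  have hY_pos : 0 < μ {ω | y ≤ Y ω} :=
    hy.trans_le (measure_mono fun ω (hω : y ≤ _) => hω.trans (min_le_left _ _))
  have hC_pos : ∀ s ≤ y, μ {ω | s ≤ C ω} ≠ 0 := fun s hs =>
    (hy.trans_le (measure_mono fun ω (hω : y ≤ _) => hs.trans (hω.trans (min_le_right _ _)))).ne'
  have hEq : (∫⁻ s in Set.Iic y, (μ {ω | s ≤ min (Y ω) (C ω)})⁻¹ ∂ν)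
      = ∫⁻ s in Set.Iic y, (μ {ω | s ≤ Y ω})⁻¹ ∂(μ.map Y) := by
    have hmeas : Measurable fun s => (μ {ω | s ≤ min (Y ω) (C ω)})⁻¹ :=
      (measurable_measure_le _).inv
    rw [hν_eq, restrict_withDensity measurableSet_Iic,
      lintegral_withDensity_eq_lintegral_mul _ (measurable_measure_le C) hmeas]
    exact setLIntegral_congr_fun measurableSet_Iic fun s hs =>
      hindep.measure_le_mul_inv_measure_le_min (hC_pos s hs)
  have hfin := lintegral_Iic_inv_measure_le_ne_top hY_pos
  exact ⟨hEq, hEq ▸ hfin, hfin⟩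
end
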